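/- arXiv:0909.5324 — 5 statements merged into one kernel-verified Lean document; each statement's English description precedes it below -/
import Mathlib

section
/- Let n ≥ 3 and let σ : ZMod n → ℤ satisfy: (i) Σ_{i ∈ ZMod n} σ i = 0; (ii) σ i ≥ -1 for all i; and (iii) for every i ∈ ZMod n and every integer k with 1 ≤ k ≤ n-1, Σ_{t=0}^{k-1} σ(i+t) ≠ 0 (i.e., no cyclic partial sum over a segment of length strictly between 0 and n vanishes; this says σ pairs nontrivially with every root of type Ã_{n-1}). Then σ = -ρ^(a) for some a ∈ ZMod n; that is, there exists a ∈ ZMod n with σ a = n-1 and σ j = -1 for all j ≠ a. -/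
/-- The affine Cartan matrix of type `Ã_{n-1}`, indexed by `ZMod n`. -/
def A (n : ℕ) (i j : ZMod n) : ℤ :=
  if i = j then 2 else if j = i + 1 ∨ j = i - 1 then -1 else 0

/-- Firing vertex `i` in type `Ã_{n-1}`. -/
def fire (n : ℕ) (i : ZMod n) (v : ZMod n → ℝ) : ZMod n → ℝ :=
  fun j => v j - (A n i j : ℝ) * v i

/-- The configuration resulting from firing the vertices in the list `l` successively. -/
def playResult (n : ℕ) : (ZMod n → ℝ) → List (ZMod n) → (ZMod n → ℝ)
  | v, [] => v
  | v, i :: l => playResult n (fire n i v) l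

/-- `IsPlay n θ v l` : the list `l` is a sequence of successive firings starting at `v`
in which each fired vertex has amplitude strictly less than `θ` at the time it is fired.
With `θ = 0` this is a legal play; with `θ = -1` a `(<-1)`-play. -/
def IsPlay (n : ℕ) (θ : ℝ) : (ZMod n → ℝ) → List (ZMod n) → Prop
  | _, [] => True
  | v, i :: l => v i < θ ∧ IsPlay n θ (fire n i v) l

/-- The configuration `ρ^(a)` : value `-(n-1)` at `a` and `1` elsewhere. -/
def rho (n : ℕ) (a : ZMod n) : ZMod n → ℝ :=
  fun j => if j = a then 1 - (n : ℝ) else 1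

/-- The extending vertex `ι0`: the class of `n/2` if `n` is even, and `0` if `n` is odd. -/
def iota0 (n : ℕ) : ZMod n :=
  if Even n then ((n / 2 : ℕ) : ZMod n) else 0


lemma shift_sum (n : ℕ) [NeZero n] (f : ZMod n → ℤ) (a : ZMod n) :
    ∑ t ∈ Finset.range n, f (a + (t : ZMod n)) = ∑ j : ZMod n, f j := by
  rw [← Fin.sum_univ_eq_sum_range (fun t => f (a + (t : ZMod n))) n]
  apply Fintype.sum_bijective (fun t : Fin n => a + ((t : ℕ) : ZMod n))
  · rw [Fintype.bijective_iff_injective_and_card]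
    refine ⟨fun s t h => ?_, by simp [ZMod.card]⟩
    have := add_left_cancel h
    have hs : ((s : ℕ) : ZMod n).val = s := ZMod.val_cast_of_lt s.isLt
    have ht : ((t : ℕ) : ZMod n).val = t := ZMod.val_cast_of_lt t.isLt
    exact Fin.ext (by rw [← hs, ← ht, this])
  · intro t; rfl

lemma key_lemma (n : ℕ) [NeZero n] (σ : ZMod n → ℤ)
    (h2 : ∀ i, -1 ≤ σ i)
    (h3 : ∀ i : ZMod n, ∀ k : ℕ, 1 ≤ k → k ≤ n - 1 →
      ∑ t ∈ Finset.range k, σ (i + (t : ZMod n)) ≠ 0)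
    (i : ZMod n) (hi : 1 ≤ σ i) :
    ∀ k : ℕ, 1 ≤ k → k ≤ n - 1 → 1 ≤ ∑ t ∈ Finset.range k, σ (i + (t : ZMod n)) := by
  intro k
  induction k with
  | zero => omega
  | succ k ih =>
    intro _ hk
    rcases Nat.eq_zero_or_pos k with rfl | hk1
    · simpa using hi
    · have hS : 1 ≤ ∑ t ∈ Finset.range k, σ (i + (t : ZMod n)) :=
        ih hk1 (by omega)
      rw [Finset.sum_range_succ]
      have h0 : 0 ≤ ∑ t ∈ Finset.range k, σ (i + (t : ZMod n)) + σ (i + (k : ZMod n)) := by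
        have := h2 (i + (k : ZMod n)); omega
      have hne := h3 i (k + 1) (by omega) hk
      rw [Finset.sum_range_succ] at hne
      omega

/-- If `σ : ZMod n → ℤ` sums to zero, has all entries `≥ -1`, and no cyclic partial sum
over a segment of length strictly between `0` and `n` vanishes, then `σ = -ρ^(a)` for
some `a`. -/
theorem neg_rho_characterization (n : ℕ) [NeZero n] (hn : 3 ≤ n) (σ : ZMod n → ℤ)
    (h1 : ∑ i : ZMod n, σ i = 0)
    (h2 : ∀ i, -1 ≤ σ i)
    (h3 : ∀ i : ZMod n, ∀ k : ℕ, 1 ≤ k → k ≤ n - 1 →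
      ∑ t ∈ Finset.range k, σ (i + (t : ZMod n)) ≠ 0) :
    ∃ a : ZMod n, σ a = (n : ℤ) - 1 ∧ ∀ j, j ≠ a → σ j = -1 := by
  have hne0 : ∀ i, σ i ≠ 0 := by
    intro i hi
    exact h3 i 1 le_rfl (by omega) (by simpa using hi)
  -- exists a with σ a ≥ 1
  have hex : ∃ a : ZMod n, 1 ≤ σ a := by
    by_contra h
    push_neg at h
    have hle : ∀ i : ZMod n, σ i ≤ -1 := fun i => by
      have := h i; have := hne0 i; omega
    have : ∑ i : ZMod n, σ i ≤ ∑ _i : ZMod n, (-1 : ℤ) :=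
      Finset.sum_le_sum fun i _ => hle i
    rw [h1, Finset.sum_const, Finset.card_univ, ZMod.card] at this
    simp only [nsmul_eq_mul, mul_neg, mul_one] at this
    omega
  obtain ⟨a, ha⟩ := hex
  have hneg : ∀ j, j ≠ a → σ j = -1 := by
    intro j hj
    by_contra hjne
    have hj1 : 1 ≤ σ j := by
      have := hne0 j; have := h2 j; omega
    set k := (j - a).val with hk
    have hk0 : k ≠ 0 := by
      intro h0
      apply hj
      have : (j - a) = 0 := (ZMod.val_eq_zero _).mp h0
      rwa [sub_eq_zero] at this
    have hkn : k < n := (j - a).val_lt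
    have hjak : j = a + (k : ZMod n) := by
      rw [hk, ZMod.natCast_val, ZMod.cast_id]
      ring
    -- partial sum from a of length k is ≥ 1
    have hSa : 1 ≤ ∑ t ∈ Finset.range k, σ (a + (t : ZMod n)) :=
      key_lemma n σ h2 h3 a ha k (by omega) (by omega)
    -- partial sum from j of length n - k is ≥ 1
    have hSj : 1 ≤ ∑ t ∈ Finset.range (n - k), σ (j + (t : ZMod n)) :=
      key_lemma n σ h2 h3 j hj1 (n - k) (by omega) (by omega)
    -- but their sum is the total sum = 0
    have hsplit : ∑ t ∈ Finset.range k, σ (a + (t : ZMod n))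
        + ∑ t ∈ Finset.range (n - k), σ (j + (t : ZMod n)) = 0 := by
      have h4 : ∑ t ∈ Finset.range (k + (n - k)), σ (a + (t : ZMod n)) = 0 := by
        rw [show k + (n - k) = n by omega, shift_sum, h1]
      rw [Finset.sum_range_add] at h4
      rw [← h4]
      congr 1
      apply Finset.sum_congr rfl
      intro t _
      congr 1
      rw [hjak]
      push_cast
      ring
    omega
  refine ⟨a, ?_, hneg⟩
  have := Finset.add_sum_erase Finset.univ σ (Finset.mem_univ a)
  have herase : ∑ j ∈ Finset.univ.erase a, σ j = -((n : ℤ) - 1) := by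
    have hconst : ∑ j ∈ Finset.univ.erase a, σ j = ∑ _j ∈ Finset.univ.erase a, (-1 : ℤ) :=
      Finset.sum_congr rfl fun j hjmem => hneg j (Finset.ne_of_mem_erase hjmem)
    rw [hconst, Finset.sum_const, Finset.card_erase_of_mem (Finset.mem_univ a),
      Finset.card_univ, ZMod.card]
    have h5 : (1:ℕ) ≤ n := by omega
    simp only [nsmul_eq_mul, mul_neg, mul_one, Nat.cast_sub h5, Nat.cast_one]
  rw [h1] at this
  omega
end

section
/- Let n ≥ 3 and let u be an integral configuration reachable from ρ^(0). Then: (a) there exists a (<-1)-play from u ending at a configuration having no coordinate strictly less than -1; (b) every such play ends at a configuration of the form -ρ^(a) for some a ∈ ZMod n; and (c) any two (<-1)-plays from u ending at configurations having no coordinate strictly less than -1 have the same length and end at the same configuration -ρ^(a), so that the vertex a and the number of moves do not depend on the choice of moves. -/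
set_option linter.unusedSectionVars false
set_option linter.unusedVariables false
set_option maxHeartbeats 1000000

section Aux
variable {n : ℕ}

lemma one_ne (hn : 3 ≤ n) : (1 : ZMod n) ≠ 0 := by
  intro h
  haveI : NeZero n := ⟨by omega⟩
  have h1 : ((1 : ℕ) : ZMod n) = 0 := by exact_mod_cast h
  have h2 := (CharP.cast_eq_zero_iff (ZMod n) n 1).mp h1
  have := Nat.le_of_dvd one_pos h2
  omega

lemma two_ne (hn : 3 ≤ n) : (2 : ZMod n) ≠ 0 := by
  intro h
  haveI : NeZero n := ⟨by omega⟩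
  have h1 : ((2 : ℕ) : ZMod n) = 0 := by exact_mod_cast h
  have h2 := (CharP.cast_eq_zero_iff (ZMod n) n 2).mp h1
  have := Nat.le_of_dvd (by norm_num) h2
  omega

lemma add_one_ne (hn : 3 ≤ n) (i : ZMod n) : i + 1 ≠ i := by
  intro h
  refine one_ne hn ?_
  have := congrArg (fun x => x - i) h
  simpa using this

lemma sub_one_ne (hn : 3 ≤ n) (i : ZMod n) : i - 1 ≠ i := by
  intro h
  refine one_ne hn ?_
  have := congrArg (fun x => i - x) h
  simpa using this

lemma add_two_ne (hn : 3 ≤ n) (i : ZMod n) : i + 1 + 1 ≠ i := by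
  intro h
  refine two_ne hn ?_
  have := congrArg (fun x => x - i) h
  simpa [add_assoc, one_add_one_eq_two] using this

lemma sub_one_ne_add_one (hn : 3 ≤ n) (i : ZMod n) : i - 1 ≠ i + 1 := by
  intro h
  refine two_ne hn ?_
  have := congrArg (fun x => x - (i - 1)) h
  simp at this
  calc (2 : ZMod n) = 1 + 1 := by norm_num
  _ = 0 := this.symm

/-! ### the height-function picture -/

def toConf (n : ℕ) (s : ZMod n → ℝ) : ZMod n → ℝ := fun j => s (j + 1) - s j

lemma A_self (i : ZMod n) : A n i i = 2 := by simp [A]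

lemma A_right (hn : 3 ≤ n) (i : ZMod n) : A n i (i + 1) = -1 := by
  have h := add_one_ne hn i
  unfold A
  rw [if_neg (fun hh => h hh.symm), if_pos (Or.inl rfl)]

lemma A_left (hn : 3 ≤ n) (i : ZMod n) : A n i (i - 1) = -1 := by
  have h := sub_one_ne hn i
  unfold A
  rw [if_neg (fun hh => h hh.symm), if_pos (Or.inr rfl)]

lemma A_other (hn : 3 ≤ n) {i j : ZMod n} (h0 : j ≠ i) (h1 : j ≠ i + 1) (h2 : j ≠ i - 1) :
    A n i j = 0 := by
  simp [A, Ne.symm h0, h1, h2]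

lemma fire_self (i : ZMod n) (v : ZMod n → ℝ) : fire n i v i = -(v i) := by
  simp [fire, A_self]; ring

lemma fire_right (hn : 3 ≤ n) (i : ZMod n) (v : ZMod n → ℝ) :
    fire n i v (i + 1) = v (i + 1) + v i := by
  simp [fire, A_right hn]

lemma fire_left (hn : 3 ≤ n) (i : ZMod n) (v : ZMod n → ℝ) :
    fire n i v (i - 1) = v (i - 1) + v i := by
  simp [fire, A_left hn]

lemma fire_other (hn : 3 ≤ n) {i j : ZMod n} (h0 : j ≠ i) (h1 : j ≠ i + 1) (h2 : j ≠ i - 1)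
    (v : ZMod n → ℝ) : fire n i v j = v j := by
  simp [fire, A_other hn h0 h1 h2]

lemma fire_toConf (hn : 3 ≤ n) (i : ZMod n) (s : ZMod n → ℝ) :
    fire n i (toConf n s) = toConf n (s ∘ (Equiv.swap i (i + 1))) := by
  have e1 : i + 1 ≠ i := add_one_ne hn i
  have e2 : i + 1 + 1 ≠ i := add_two_ne hn i
  have e2' : i + 1 + 1 ≠ i + 1 := add_one_ne hn (i + 1)
  have e3 : i - 1 ≠ i := sub_one_ne hn i
  have e4 : i - 1 ≠ i + 1 := sub_one_ne_add_one hn i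
  funext j
  by_cases hji : j = i
  · subst hji
    rw [fire_self]
    simp only [toConf, Function.comp_apply, Equiv.swap_apply_left,
      Equiv.swap_apply_right]
    ring
  by_cases hj1 : j = i + 1
  · subst hj1
    rw [fire_right hn]
    simp only [toConf, Function.comp_apply, Equiv.swap_apply_right,
      Equiv.swap_apply_of_ne_of_ne e2 e2']
    ring
  by_cases hj2 : j = i - 1
  · subst hj2
    rw [fire_left hn]
    have hsc : i - 1 + 1 = i := by ring
    simp only [toConf, Function.comp_apply, hsc, Equiv.swap_apply_left,
      Equiv.swap_apply_of_ne_of_ne e3 e4]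
    ring
  · rw [fire_other hn hji hj1 hj2]
    have g1 : j + 1 ≠ i := fun h => hj2 (by rw [← h]; ring)
    have g2 : j + 1 ≠ i + 1 := fun h => hji (by
      have := congrArg (fun x => x - 1) h
      simpa using this)
    simp only [toConf, Function.comp_apply,
      Equiv.swap_apply_of_ne_of_ne hji hj1, Equiv.swap_apply_of_ne_of_ne g1 g2]

/-- the class of reachable (from `ρ⁰`) integral configurations -/
def NiceCfg (n : ℕ) (v : ZMod n → ℝ) : Prop :=
  ∃ e : ZMod n ≃ ZMod n, v = toConf n (fun j => ((e j).val : ℝ))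

lemma niceCfg_fire (hn : 3 ≤ n) {v : ZMod n → ℝ} (h : NiceCfg n v) (i : ZMod n) :
    NiceCfg n (fire n i v) := by
  obtain ⟨e, rfl⟩ := h
  refine ⟨(Equiv.swap i (i + 1)).trans e, ?_⟩
  rw [fire_toConf hn]
  rfl

lemma fire_comm (hn : 3 ≤ n) {i j : ZMod n} (h0 : j ≠ i) (h1 : j ≠ i + 1) (h2 : j ≠ i - 1)
    (v : ZMod n → ℝ) : fire n j (fire n i v) = fire n i (fire n j v) := by
  have g0 : i ≠ j := Ne.symm h0
  have g1 : i ≠ j + 1 := fun h => h2 (by rw [h]; ring)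
  have g2 : i ≠ j - 1 := fun h => h1 (by rw [h]; ring)
  funext k
  simp only [fire]
  rw [show A n i j = 0 from A_other hn h0 h1 h2, show A n j i = 0 from A_other hn g0 g1 g2]
  push_cast
  ring

lemma swap_braid (hn : 3 ≤ n) (i x : ZMod n) :
    Equiv.swap i (i+1) (Equiv.swap (i+1) (i+1+1) (Equiv.swap i (i+1) x)) =
    Equiv.swap (i+1) (i+1+1) (Equiv.swap i (i+1) (Equiv.swap (i+1) (i+1+1) x)) := by
  have d01 : i ≠ i + 1 := fun h => add_one_ne hn i h.symm
  have d02 : i ≠ i + 1 + 1 := fun h => add_two_ne hn i h.symm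
  have d12 : i + 1 ≠ i + 1 + 1 := fun h => add_one_ne hn (i+1) h.symm
  by_cases hx0 : x = i
  · subst hx0
    simp [Equiv.swap_apply_def, d01, d02, d12, Ne.symm d01, Ne.symm d02, Ne.symm d12]
  by_cases hx1 : x = i + 1
  · subst hx1
    simp [Equiv.swap_apply_def, d01, d02, d12, Ne.symm d01, Ne.symm d02, Ne.symm d12]
  by_cases hx2 : x = i + 1 + 1
  · subst hx2
    simp [Equiv.swap_apply_def, d01, d02, d12, Ne.symm d01, Ne.symm d02, Ne.symm d12]
  · simp [Equiv.swap_apply_def, hx0, hx1, hx2]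

lemma fire_braid (hn : 3 ≤ n) {v : ZMod n → ℝ} (hN : NiceCfg n v) (i : ZMod n) :
    fire n i (fire n (i+1) (fire n i v)) = fire n (i+1) (fire n i (fire n (i+1) v)) := by
  obtain ⟨e, rfl⟩ := hN
  rw [fire_toConf hn, fire_toConf hn, fire_toConf hn, fire_toConf hn, fire_toConf hn,
    fire_toConf hn]
  have hfun : (((fun j => ((e j).val : ℝ)) ∘ ⇑(Equiv.swap i (i+1))) ∘ ⇑(Equiv.swap (i+1) (i+1+1))) ∘ ⇑(Equiv.swap i (i+1))
      = (((fun j => ((e j).val : ℝ)) ∘ ⇑(Equiv.swap (i+1) (i+1+1))) ∘ ⇑(Equiv.swap i (i+1))) ∘ ⇑(Equiv.swap (i+1) (i+1+1)) := by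
    funext x
    show ((e (Equiv.swap i (i+1) (Equiv.swap (i+1) (i+1+1) (Equiv.swap i (i+1) x)))).val : ℝ)
        = ((e (Equiv.swap (i+1) (i+1+1) (Equiv.swap i (i+1) (Equiv.swap (i+1) (i+1+1) x)))).val : ℝ)
    rw [swap_braid hn i x]
  rw [hfun]

end Aux

section PlayLemmas
variable {n : ℕ} {θ : ℝ}

@[simp] lemma playResult_nil (v : ZMod n → ℝ) : playResult n v [] = v := rfl

@[simp] lemma playResult_cons (v : ZMod n → ℝ) (i : ZMod n) (l : List (ZMod n)) :
    playResult n v (i :: l) = playResult n (fire n i v) l := rfl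

@[simp] lemma isPlay_nil (v : ZMod n → ℝ) : IsPlay n θ v [] := trivial

lemma isPlay_cons {v : ZMod n → ℝ} {i : ZMod n} {l : List (ZMod n)} :
    IsPlay n θ v (i :: l) ↔ v i < θ ∧ IsPlay n θ (fire n i v) l := Iff.rfl

lemma playResult_append (v : ZMod n → ℝ) (p q : List (ZMod n)) :
    playResult n v (p ++ q) = playResult n (playResult n v p) q := by
  induction p generalizing v with
  | nil => rfl
  | cons i l ih => simp [ih]

lemma isPlay_append {v : ZMod n → ℝ} {p q : List (ZMod n)} :
    IsPlay n θ v (p ++ q) ↔ IsPlay n θ v p ∧ IsPlay n θ (playResult n v p) q := by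
  induction p generalizing v with
  | nil => simp
  | cons i l ih => simp [isPlay_cons, ih, and_assoc]

end PlayLemmas

section Aux
variable {n : ℕ} [NeZero n]

lemma val_pos {z : ZMod n} (hz : z ≠ 0) : 1 ≤ z.val :=
  Nat.pos_of_ne_zero (fun h => hz ((ZMod.val_eq_zero z).mp h))

lemma sub_one_val {z : ZMod n} (hz : z ≠ 0) : (z - 1).val + 1 = z.val := by
  have h1 : 1 ≤ z.val := val_pos hz
  have hlt : z.val - 1 < n := lt_of_le_of_lt (Nat.sub_le _ _) (ZMod.val_lt z)
  have key : z - 1 = ((z.val - 1 : ℕ) : ZMod n) := by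
    conv_lhs => rw [← ZMod.natCast_zmod_val z]
    rw [Nat.cast_sub h1, Nat.cast_one]
  rw [key, ZMod.val_cast_of_lt hlt]
  omega

lemma add_one_val {z : ZMod n} (hz : z + 1 ≠ 0) : (z + 1).val = z.val + 1 := by
  have h := sub_one_val hz
  rw [add_sub_cancel_right] at h
  omega

lemma neg_one_cast (hn : 1 ≤ n) : ((n - 1 : ℕ) : ZMod n) = -1 := by
  rw [Nat.cast_sub hn, Nat.cast_one, ZMod.natCast_self, zero_sub]

lemma val_neg_one' (hn : 1 ≤ n) : (-1 : ZMod n).val = n - 1 := by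
  rw [← neg_one_cast hn, ZMod.val_cast_of_lt (by omega)]

/-- `ρ⁰` is nice. -/
lemma nice_rho (hn : 3 ≤ n) : NiceCfg n (rho n 0) := by
  refine ⟨Equiv.subRight (1 : ZMod n), ?_⟩
  funext j
  simp only [toConf, rho, Equiv.subRight_apply, add_sub_cancel_right]
  by_cases hj : j = 0
  · subst hj
    rw [if_pos rfl]
    rw [show (0 : ZMod n) - 1 = -1 by ring]
    rw [val_neg_one' (by omega), ZMod.val_zero]
    rw [Nat.cast_sub (by omega : 1 ≤ n), Nat.cast_one]
    push_cast
    ring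
  · rw [if_neg hj]
    have h := sub_one_val (n := n) hj
    have : ((j.val : ℕ) : ℝ) = ((j - 1).val : ℝ) + 1 := by exact_mod_cast h.symm
    rw [this]
    ring

/-- terminal nice configurations are staircases `-ρ^(a)`. -/
lemma staircase (hn : 3 ≤ n) {v : ZMod n → ℝ} (hN : NiceCfg n v)
    (ht : ∀ j, -1 ≤ v j) : ∃ a, v = fun j => -(rho n a j) := by
  obtain ⟨e, rfl⟩ := hN
  have key : ∀ j : ZMod n, (e j).val ≤ (e (j + 1)).val + 1 := by
    intro j
    have h1 := ht j
    simp only [toConf] at h1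
    have h2 : ((e j).val : ℝ) ≤ ((e (j + 1)).val : ℝ) + 1 := by linarith
    exact_mod_cast h2
  set t := e.symm (-1) with htdef
  have hstep : ∀ k : ℕ, k < n → e (t + (k : ZMod n)) = ((n - 1 - k : ℕ) : ZMod n) := by
    intro k
    induction k using Nat.strong_induction_on with
    | _ k IH =>
    intro hk
    match k, hk with
    | 0, _ => simpa [htdef, neg_one_cast (by omega : 1 ≤ n)] using rfl
    | (k+1), hk1 =>
      have hk : k < n := by omega
      have hik := IH k (by omega) hk
      have hvals : ∀ j : ℕ, j ≤ k → (e (t + (j : ZMod n))).val = n - 1 - j := by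
        intro j hj
        rw [IH j (by omega) (by omega), ZMod.val_cast_of_lt (by omega)]
      have hcast : (((k+1 : ℕ)) : ZMod n) = ((k : ℕ) : ZMod n) + 1 := by push_cast; ring
      have hkey := key (t + (k : ZMod n))
      rw [hvals k le_rfl] at hkey
      rw [show t + (k : ZMod n) + 1 = t + (((k+1 : ℕ)) : ZMod n) by rw [hcast]; ring] at hkey
      set m := (e (t + (((k+1):ℕ) : ZMod n))).val with hmdef
      have hmlt : m < n := ZMod.val_lt _
      have hne : ∀ j : ℕ, j ≤ k → m ≠ n - 1 - j := by
        intro j hj hcontra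
        have hj' : (e (t + (((k+1):ℕ) : ZMod n))).val = (e (t + (j : ZMod n))).val := by
          rw [hvals j hj, ← hcontra]
        have := ZMod.val_injective n hj'
        have := e.injective this
        have h3 : (((k+1):ℕ) : ZMod n) = ((j : ℕ) : ZMod n) := by
          have := congrArg (fun x => x - t) this
          simpa using this
        have h4 := congrArg ZMod.val h3
        rw [ZMod.val_cast_of_lt (by omega), ZMod.val_cast_of_lt (by omega)] at h4
        omega
      have hm : m = n - 1 - (k + 1) := by
        rcases Nat.lt_or_ge m (n - 1 - k) with h | h
        · omega
        · exfalso
          exact hne (n - 1 - m) (by omega) (by omega)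
      have : e (t + (((k+1):ℕ) : ZMod n)) = ((m : ℕ) : ZMod n) := by
        rw [hmdef, ZMod.natCast_zmod_val]
      rw [this, hm]
  refine ⟨t - 1, ?_⟩
  funext j
  have hjk : j = t + (((j - t).val : ℕ) : ZMod n) := by
    rw [ZMod.natCast_zmod_val]; ring
  set k := (j - t).val with hkdef
  have hkn : k < n := ZMod.val_lt _
  show ((e (j + 1)).val : ℝ) - ((e j).val : ℝ) = -(rho n (t - 1) j)
  by_cases hj : j = t - 1
  · subst hj
    have h1 : t - 1 + 1 = t := by ring
    have h2 : e t = -1 := by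
      rw [htdef]; exact e.apply_symm_apply _
    have h3 : t - 1 = t + (((n-1 : ℕ)) : ZMod n) := by
      rw [neg_one_cast (by omega : 1 ≤ n)]; ring
    have h4 : e (t - 1) = ((n - 1 - (n-1) : ℕ) : ZMod n) := by
      rw [h3]; exact hstep (n-1) (by omega)
    rw [h1, h2, h4]
    rw [val_neg_one' (by omega : 1 ≤ n)]
    simp only [Nat.sub_self, Nat.cast_zero, ZMod.val_zero, rho, if_pos rfl]
    rw [Nat.cast_sub (by omega : 1 ≤ n), Nat.cast_one]
    push_cast
    ring
  · have hklt : k + 1 < n := by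
      rcases Nat.lt_or_ge (k+1) n with h | h
      · exact h
      · exfalso
        have hk1 : k = n - 1 := by omega
        apply hj
        rw [hjk, hk1, neg_one_cast (by omega : 1 ≤ n)]
        ring
    have h1 : e j = ((n - 1 - k : ℕ) : ZMod n) := by
      rw [hjk]; exact hstep k hkn
    have h2 : e (j + 1) = ((n - 1 - (k+1) : ℕ) : ZMod n) := by
      have : j + 1 = t + (((k+1):ℕ) : ZMod n) := by
        rw [hjk]; push_cast; ring
      rw [this]; exact hstep (k+1) hklt
    rw [h1, h2, ZMod.val_cast_of_lt (by omega), ZMod.val_cast_of_lt (by omega)]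
    have hrho : rho n (t-1) j = 1 := by
      rw [rho]; exact if_neg hj
    rw [hrho]
    rw [Nat.cast_sub (by omega : k + 1 ≤ n - 1), Nat.cast_sub (by omega : k ≤ n - 1),
      Nat.cast_sub (by omega : 1 ≤ n)]
    push_cast
    ring

end Aux

/-! ### the potential function -/

def ww : ℕ → ℕ
  | 0 => 0
  | k+1 => ww k + (k+1)

lemma ww_mono : Monotone ww := by
  apply monotone_nat_of_le_succ
  intro k
  show ww k ≤ ww k + (k+1)
  omega

def del {n : ℕ} (e : ZMod n ≃ ZMod n) (k : ℕ) : ℕ :=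
  ((e.symm ((k+1 : ℕ) : ZMod n)) - (e.symm ((k : ℕ) : ZMod n))).val

def Phi (n : ℕ) (e : ZMod n ≃ ZMod n) : ℕ :=
  ∑ k ∈ Finset.range (n-1), (ww (n-1) - ww k) * del e k

lemma del_le {n : ℕ} [NeZero n] (e : ZMod n ≃ ZMod n) (k : ℕ) : del e k ≤ n - 1 := by
  have := ZMod.val_lt ((e.symm ((k+1:ℕ) : ZMod n)) - e.symm ((k:ℕ) : ZMod n))
  unfold del
  omega

lemma Phi_le (n : ℕ) [NeZero n] (e : ZMod n ≃ ZMod n) :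
    Phi n e ≤ (n-1) * (ww (n-1) * (n-1)) := by
  have h1 : ∀ k ∈ Finset.range (n-1), (ww (n-1) - ww k) * del e k ≤ ww (n-1) * (n-1) :=
    fun k _ => Nat.mul_le_mul (by omega) (del_le e k)
  calc Phi n e ≤ ∑ _k ∈ Finset.range (n-1), ww (n-1) * (n-1) := Finset.sum_le_sum h1
  _ = (n-1) * (ww (n-1) * (n-1)) := by rw [Finset.sum_const, Finset.card_range, smul_eq_mul]

lemma sum_shift (N : ℕ) (c : ℕ) (f : ℕ → ℤ) :
    ∑ k ∈ Finset.range N, (if k + 1 = c then f k else 0) =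
      if 1 ≤ c ∧ c ≤ N then f (c-1) else 0 := by
  cases c with
  | zero => simp
  | succ c =>
    have h1 : ∑ k ∈ Finset.range N, (if k + 1 = c + 1 then f k else 0)
        = ∑ k ∈ Finset.range N, (if k = c then f k else 0) :=
      Finset.sum_congr rfl (fun k _ => by simp)
    rw [h1, Finset.sum_ite_eq' (Finset.range N) c f]
    by_cases h : c < N
    · rw [if_pos (Finset.mem_range.mpr h), if_pos (by omega)]
      simp
    · rw [if_neg (fun hc => h (Finset.mem_range.mp hc)), if_neg (by omega)]

lemma phi_incr {n : ℕ} (hn : 3 ≤ n) [NeZero n] (e : ZMod n ≃ ZMod n) (i : ZMod n)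
    (hfire : (e (i+1)).val + 2 ≤ (e i).val) :
    Phi n e + 1 ≤ Phi n ((Equiv.swap i (i+1)).trans e) := by
  set e' : ZMod n ≃ ZMod n := (Equiv.swap i (i+1)).trans e with he'
  set a := e i with ha
  set b := e (i+1) with hb
  have hsymm : ∀ x, e'.symm x = Equiv.swap i (i+1) (e.symm x) := by
    intro x
    rw [he', Equiv.symm_trans_apply, Equiv.symm_swap]
  have hsa : e.symm a = i := e.symm_apply_apply i
  have hsb : e.symm b = i + 1 := e.symm_apply_apply (i+1)
  have hina : i + 1 ≠ i := add_one_ne hn i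
  have havlt : a.val < n := ZMod.val_lt a
  have hbvlt : b.val < n := ZMod.val_lt b
  have hcastgen : ∀ (k : ℕ) (z : ZMod n), k < n → (((k : ℕ) : ZMod n) = z ↔ k = z.val) := by
    intro k z hk
    constructor
    · intro h; rw [← h, ZMod.val_cast_of_lt hk]
    · intro h; rw [h, ZMod.natCast_zmod_val]
  have hfix : ∀ (k : ℕ), k < n → k ≠ a.val → k ≠ b.val →
      (e'.symm ((k:ℕ) : ZMod n) = e.symm ((k:ℕ) : ZMod n) ∧
       e.symm ((k:ℕ) : ZMod n) ≠ i ∧ e.symm ((k:ℕ) : ZMod n) ≠ i + 1) := by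
    intro k hk hka hkb
    have h1 : e.symm ((k:ℕ) : ZMod n) ≠ i := by
      intro h
      exact hka ((hcastgen k a hk).mp ((Equiv.symm_apply_eq e).mp h))
    have h2 : e.symm ((k:ℕ) : ZMod n) ≠ i + 1 := by
      intro h
      exact hkb ((hcastgen k b hk).mp ((Equiv.symm_apply_eq e).mp h))
    exact ⟨by rw [hsymm]; exact Equiv.swap_apply_of_ne_of_ne h1 h2, h1, h2⟩
  have hpa : e'.symm a = i + 1 := by rw [hsymm, hsa, Equiv.swap_apply_left]
  have hpb : e'.symm b = i := by rw [hsymm, hsb, Equiv.swap_apply_right]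
  -- pointwise change of `del`
  have hpoint : ∀ k ∈ Finset.range (n-1),
      (del e' k : ℤ) - del e k =
        (if k + 1 = a.val then 1 else 0) - (if k = a.val then 1 else 0)
        + (if k = b.val then 1 else 0) - (if k + 1 = b.val then 1 else 0) := by
    intro k hkmem
    rw [Finset.mem_range] at hkmem
    have hk : k < n := by omega
    have hk1 : k + 1 < n := by omega
    by_cases c1 : k + 1 = a.val
    · have nc2 : ¬ (k = a.val) := by omega
      have nc3 : ¬ (k = b.val) := by omega
      have nc4 : ¬ (k + 1 = b.val) := by omega
      have hra : ((k+1 : ℕ) : ZMod n) = a := (hcastgen (k+1) a hk1).mpr c1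
      obtain ⟨hfx, hne1, hne2⟩ := hfix k hk nc2 nc3
      have hd : (del e' k : ℤ) = del e k + 1 := by
        unfold del
        rw [hra, hpa, hfx, hsa]
        have hz : i - e.symm ((k:ℕ) : ZMod n) + 1 ≠ 0 := by
          intro h
          apply hne2
          linear_combination -h
        rw [show i + 1 - e.symm ((k:ℕ) : ZMod n) = (i - e.symm ((k:ℕ) : ZMod n)) + 1 by ring]
        rw [add_one_val hz]
        push_cast
        ring
      rw [hd, if_pos c1, if_neg nc2, if_neg nc3, if_neg nc4]
      ring
    by_cases c2 : k = a.val
    · have nc3 : ¬ (k = b.val) := by omega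
      have nc4 : ¬ (k + 1 = b.val) := by omega
      have hla : ((k : ℕ) : ZMod n) = a := (hcastgen k a hk).mpr c2
      obtain ⟨hfx, hne1, hne2⟩ := hfix (k+1) hk1 (by omega) (by omega)
      have hd : del e k = del e' k + 1 := by
        unfold del
        rw [hla, hpa, hfx, hsa]
        have hz : e.symm (((k+1):ℕ) : ZMod n) - i ≠ 0 := fun h => hne1 (by linear_combination h)
        rw [show e.symm (((k+1):ℕ) : ZMod n) - (i + 1) = (e.symm (((k+1):ℕ) : ZMod n) - i) - 1 by ring]
        exact (sub_one_val hz).symm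
      rw [if_neg c1, if_pos c2, if_neg nc3, if_neg nc4]
      omega
    by_cases c3 : k = b.val
    · have nc4 : ¬ (k + 1 = b.val) := by omega
      have hlb : ((k : ℕ) : ZMod n) = b := (hcastgen k b hk).mpr c3
      obtain ⟨hfx, hne1, hne2⟩ := hfix (k+1) hk1 (by omega) (by omega)
      have hd : (del e' k : ℤ) = del e k + 1 := by
        unfold del
        rw [hlb, hpb, hfx, hsb]
        have hz : e.symm (((k+1):ℕ) : ZMod n) - (i+1) + 1 ≠ 0 := by
          intro h
          apply hne1
          linear_combination h
        rw [show e.symm (((k+1):ℕ) : ZMod n) - i = (e.symm (((k+1):ℕ) : ZMod n) - (i+1)) + 1 by ring]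
        rw [add_one_val hz]
        push_cast
        ring
      rw [hd, if_neg c1, if_neg c2, if_pos c3, if_neg nc4]
      ring
    by_cases c4 : k + 1 = b.val
    · have hrb : (((k+1) : ℕ) : ZMod n) = b := (hcastgen (k+1) b hk1).mpr c4
      obtain ⟨hfx, hne1, hne2⟩ := hfix k hk (by omega) (by omega)
      have hd : del e k = del e' k + 1 := by
        unfold del
        rw [hrb, hpb, hfx, hsb]
        have hz : i + 1 - e.symm ((k:ℕ) : ZMod n) ≠ 0 := fun h => hne2 (by linear_combination -h)
        rw [show i - e.symm ((k:ℕ) : ZMod n) = (i + 1 - e.symm ((k:ℕ) : ZMod n)) - 1 by ring]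
        exact (sub_one_val hz).symm
      rw [if_neg c1, if_neg c2, if_neg c3, if_pos c4]
      omega
    · obtain ⟨hfx, _, _⟩ := hfix k hk c2 c3
      obtain ⟨hfx1, _, _⟩ := hfix (k+1) hk1 (by omega) (by omega)
      have hd : del e' k = del e k := by
        unfold del
        rw [hfx, hfx1]
      rw [hd, if_neg c1, if_neg c2, if_neg c3, if_neg c4]
      ring
  -- summation
  have hstep2 : (Phi n e' : ℤ) - Phi n e
      = ∑ k ∈ Finset.range (n-1),
          (((ww (n-1) - ww k : ℕ) : ℤ) * ((del e' k : ℤ) - (del e k : ℤ))) := by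
    rw [Phi, Phi, Nat.cast_sum, Nat.cast_sum, ← Finset.sum_sub_distrib]
    exact Finset.sum_congr rfl (fun k _ => by push_cast; ring)
  have hstep3 : (Phi n e' : ℤ) - Phi n e
      = (∑ k ∈ Finset.range (n-1), (if k + 1 = a.val then ((ww (n-1) - ww k : ℕ) : ℤ) else 0))
        - (∑ k ∈ Finset.range (n-1), (if k = a.val then ((ww (n-1) - ww k : ℕ) : ℤ) else 0))
        + (∑ k ∈ Finset.range (n-1), (if k = b.val then ((ww (n-1) - ww k : ℕ) : ℤ) else 0))
        - (∑ k ∈ Finset.range (n-1), (if k + 1 = b.val then ((ww (n-1) - ww k : ℕ) : ℤ) else 0)) := by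
    have hsplit : ∀ k ∈ Finset.range (n-1),
        ((ww (n-1) - ww k : ℕ) : ℤ) * ((del e' k : ℤ) - (del e k : ℤ)) =
          (if k + 1 = a.val then ((ww (n-1) - ww k : ℕ) : ℤ) else 0)
          - (if k = a.val then ((ww (n-1) - ww k : ℕ) : ℤ) else 0)
          + (if k = b.val then ((ww (n-1) - ww k : ℕ) : ℤ) else 0)
          - (if k + 1 = b.val then ((ww (n-1) - ww k : ℕ) : ℤ) else 0) := by
      intro k hk
      rw [hpoint k hk]
      split_ifs <;> ring
    rw [hstep2, Finset.sum_congr rfl hsplit, Finset.sum_sub_distrib, Finset.sum_add_distrib,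
      Finset.sum_sub_distrib]
  have hS1 : ∑ k ∈ Finset.range (n-1), (if k + 1 = a.val then ((ww (n-1) - ww k : ℕ) : ℤ) else 0)
      = ((ww (n-1) - ww (a.val - 1) : ℕ) : ℤ) := by
    rw [sum_shift, if_pos ⟨by omega, by omega⟩]
  have hS2 : ∑ k ∈ Finset.range (n-1), (if k = a.val then ((ww (n-1) - ww k : ℕ) : ℤ) else 0)
      = if a.val ∈ Finset.range (n-1) then ((ww (n-1) - ww a.val : ℕ) : ℤ) else 0 :=
    Finset.sum_ite_eq' (Finset.range (n-1)) a.val _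
  have hS3 : ∑ k ∈ Finset.range (n-1), (if k = b.val then ((ww (n-1) - ww k : ℕ) : ℤ) else 0)
      = ((ww (n-1) - ww b.val : ℕ) : ℤ) := by
    rw [Finset.sum_ite_eq' (Finset.range (n-1)) b.val _,
      if_pos (Finset.mem_range.mpr (by omega))]
  have hS4 : ∑ k ∈ Finset.range (n-1), (if k + 1 = b.val then ((ww (n-1) - ww k : ℕ) : ℤ) else 0)
      = if 1 ≤ b.val ∧ b.val ≤ n - 1 then ((ww (n-1) - ww (b.val - 1) : ℕ) : ℤ) else 0 := by
    rw [sum_shift]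
  -- arithmetic facts about ww
  have wmono : ∀ x y : ℕ, x ≤ y → ww x ≤ ww y := fun x y h => ww_mono h
  have w1 : ww a.val = ww (a.val - 1) + a.val := by
    have hp : a.val - 1 + 1 = a.val := by omega
    have h := (show ww (a.val - 1 + 1) = ww (a.val - 1) + (a.val - 1 + 1) from rfl)
    rw [hp] at h
    exact h
  have w2 : 1 ≤ b.val → ww b.val = ww (b.val - 1) + b.val := by
    intro hb1
    have hp : b.val - 1 + 1 = b.val := by omega
    have h := (show ww (b.val - 1 + 1) = ww (b.val - 1) + (b.val - 1 + 1) from rfl)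
    rw [hp] at h
    exact h
  have w3 : ww (n-1) = ww (n-2) + (n-1) := by
    have hp : n - 2 + 1 = n - 1 := by omega
    have h := (show ww (n - 2 + 1) = ww (n - 2) + (n - 2 + 1) from rfl)
    rw [hp] at h
    exact h
  have m1 : ww (a.val - 1) ≤ ww (n-1) := wmono _ _ (by omega)
  have m2 : ww a.val ≤ ww (n-1) := wmono _ _ (by omega)
  have m3 : ww b.val ≤ ww (n-1) := wmono _ _ (by omega)
  have m4 : ww (b.val - 1) ≤ ww (n-1) := wmono _ _ (by omega)
  have m5 : a.val - 1 ≤ n - 2 := by omega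
  have m6 : ww (a.val - 1) ≤ ww (n - 2) := wmono _ _ m5
  -- conclude
  have cc1 : ((ww (n-1) - ww (a.val - 1) : ℕ) : ℤ) = (ww (n-1) : ℤ) - ww (a.val - 1) := by
    rw [Nat.cast_sub m1]
  have cc2 : ((ww (n-1) - ww a.val : ℕ) : ℤ) = (ww (n-1) : ℤ) - ww a.val := by
    rw [Nat.cast_sub m2]
  have cc3 : ((ww (n-1) - ww b.val : ℕ) : ℤ) = (ww (n-1) : ℤ) - ww b.val := by
    rw [Nat.cast_sub m3]
  have cc4 : ((ww (n-1) - ww (b.val - 1) : ℕ) : ℤ) = (ww (n-1) : ℤ) - ww (b.val - 1) := by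
    rw [Nat.cast_sub m4]
  have hb2 : b.val ≤ n - 1 := by omega
  have final : (Phi n e : ℤ) + 1 ≤ Phi n e' := by
    rw [show (Phi n e' : ℤ) = ((Phi n e' : ℤ) - Phi n e) + Phi n e by ring, hstep3,
      hS1, hS2, hS3, hS4, cc1, cc2, cc3, cc4]
    simp only [Finset.mem_range]
    by_cases hc1 : a.val < n - 1 <;> by_cases hc2 : 1 ≤ b.val <;>
      simp only [hc1, hc2, hb2, if_true, if_false, true_and, and_true] <;>
      omega
  exact_mod_cast final

/-! ### Diamond property and strong convergence -/

section Diamond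
variable {n : ℕ}

lemma niceCfg_playResult (hn : 3 ≤ n) {v : ZMod n → ℝ} (h : NiceCfg n v)
    (p : List (ZMod n)) : NiceCfg n (playResult n v p) := by
  induction p generalizing v with
  | nil => exact h
  | cons i l ih => exact ih (niceCfg_fire hn h i)

lemma diamond_adj (hn : 3 ≤ n) {v : ZMod n → ℝ} (hN : NiceCfg n v) (i : ZMod n)
    (hi : v i < -1) (hi1 : v (i+1) < -1) :
    IsPlay n (-1) (fire n i v) [i+1, i] ∧ IsPlay n (-1) (fire n (i+1) v) [i, i+1] ∧
    playResult n (fire n i v) [i+1, i] = playResult n (fire n (i+1) v) [i, i+1] := by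
  have f1 : fire n i v (i+1) = v (i+1) + v i := fire_right hn i v
  have hc : i + 1 - 1 = i := by ring
  have f2 : fire n (i+1) v i = v i + v (i+1) := by
    have h := fire_left hn (i+1) v
    rwa [hc] at h
  have f3 : fire n (i+1) (fire n i v) i = fire n i v i + fire n i v (i+1) := by
    have h := fire_left hn (i+1) (fire n i v)
    rwa [hc] at h
  rw [fire_self, f1] at f3
  have f4 : fire n i (fire n (i+1) v) (i+1) = fire n (i+1) v (i+1) + fire n (i+1) v i :=
    fire_right hn i (fire n (i+1) v)
  rw [fire_self, f2] at f4
  refine ⟨⟨by rw [f1]; linarith, by rw [f3]; linarith, trivial⟩,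
    ⟨by rw [f2]; linarith, by rw [f4]; linarith, trivial⟩, ?_⟩
  show fire n i (fire n (i+1) (fire n i v)) = fire n (i+1) (fire n i (fire n (i+1) v))
  exact fire_braid hn hN i

lemma diamond (hn : 3 ≤ n) {v : ZMod n → ℝ} (hN : NiceCfg n v) {i j : ZMod n}
    (hij : i ≠ j) (hi : v i < -1) (hj : v j < -1) :
    ∃ d1 d2 : List (ZMod n), IsPlay n (-1) (fire n i v) d1 ∧ IsPlay n (-1) (fire n j v) d2 ∧
      d1.length = d2.length ∧
      playResult n (fire n i v) d1 = playResult n (fire n j v) d2 := by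
  by_cases h1 : j = i + 1
  · subst h1
    obtain ⟨pa, pb, pe⟩ := diamond_adj hn hN i hi hj
    exact ⟨[i+1, i], [i, i+1], pa, pb, rfl, pe⟩
  by_cases h2 : j = i - 1
  · subst h2
    have hii : i - 1 + 1 = i := by ring
    obtain ⟨pa, pb, pe⟩ := diamond_adj hn hN (i-1) hj (by rw [hii]; exact hi)
    rw [hii] at pa pb pe
    exact ⟨[i-1, i], [i, i-1], pb, pa, rfl, pe.symm⟩
  · have hji : j ≠ i := Ne.symm hij
    refine ⟨[j], [i], ⟨by rw [fire_other hn hji h1 h2]; exact hj, trivial⟩, ?_, rfl, ?_⟩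
    · have g1 : i ≠ j + 1 := fun h => h2 (by rw [h]; ring)
      have g2 : i ≠ j - 1 := fun h => h1 (by rw [h]; ring)
      exact ⟨by rw [fire_other hn hij g1 g2]; exact hi, trivial⟩
    · show fire n j (fire n i v) = fire n i (fire n j v)
      exact fire_comm hn hji h1 h2 v

/-- strong convergence: any `(<-1)`-play can be completed to a terminal play of the
same length and same endpoint as any given terminal play. -/
lemma strong (hn : 3 ≤ n) : ∀ m : ℕ, ∀ v : ZMod n → ℝ, NiceCfg n v →
    ∀ p, IsPlay n (-1) v p → (∀ j, -1 ≤ playResult n v p j) → p.length = m →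
    ∀ s, IsPlay n (-1) v s →
    ∃ t, IsPlay n (-1) v (s ++ t) ∧ (∀ j, -1 ≤ playResult n v (s ++ t) j) ∧
      (s ++ t).length = m ∧ playResult n v (s ++ t) = playResult n v p := by
  intro m
  induction m using Nat.strong_induction_on with
  | _ m IH =>
  intro v hN p hp hterm hlen s hs
  cases s with
  | nil =>
    exact ⟨p, by simpa using hp, by simpa using hterm, by simpa using hlen, by simp⟩
  | cons j s₁ =>
    obtain ⟨hsj, hs₁⟩ := hs
    cases p with
    | nil =>
      exact absurd (hterm j) (not_le.mpr hsj)
    | cons i p₁ =>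
      obtain ⟨hpi, hp₁⟩ := hp
      have hm : p₁.length + 1 = m := by simpa using hlen
      by_cases hji : j = i
      · subst hji
        obtain ⟨t, ht1, ht2, ht3, ht4⟩ := IH p₁.length (by omega) (fire n j v)
          (niceCfg_fire hn hN j) p₁ hp₁ (fun x => by simpa using hterm x) rfl s₁ hs₁
        refine ⟨t, ⟨hsj, ht1⟩, fun x => by simpa using ht2 x, ?_, ?_⟩
        · simp only [List.cons_append, List.length_cons] at hm ⊢
          omega
        · simpa using ht4
      · obtain ⟨d1, d2, hd1, hd2, hdl, hde⟩ := diamond hn hN (Ne.symm hji) hpi hsj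
        have htermi : ∀ x, -1 ≤ playResult n (fire n i v) p₁ x := fun x => by
          simpa using hterm x
        obtain ⟨t₁, h11, h12, h13, h14⟩ := IH p₁.length (by omega) (fire n i v)
          (niceCfg_fire hn hN i) p₁ hp₁ htermi rfl d1 hd1
        have k1 : IsPlay n (-1) (fire n j v) (d2 ++ t₁) := by
          rw [isPlay_append]
          refine ⟨hd2, ?_⟩
          rw [← hde]
          exact (isPlay_append.mp h11).2
        have k2res : playResult n (fire n j v) (d2 ++ t₁) = playResult n (fire n i v) p₁ := by
          rw [playResult_append, ← hde, ← playResult_append]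
          exact h14
        have k2 : ∀ x, -1 ≤ playResult n (fire n j v) (d2 ++ t₁) x := by
          rw [k2res]; exact htermi
        have k3 : (d2 ++ t₁).length = p₁.length := by
          rw [List.length_append] at h13 ⊢
          omega
        obtain ⟨t₂, g1, g2, g3, g4⟩ := IH p₁.length (by omega) (fire n j v)
          (niceCfg_fire hn hN j) (d2 ++ t₁) k1 k2 k3 s₁ hs₁
        refine ⟨t₂, ⟨hsj, g1⟩, fun x => by simpa using g2 x, ?_, ?_⟩
        · simp only [List.cons_append, List.length_cons] at g3 hm ⊢
          omega
        · have hfin : playResult n (fire n j v) (s₁ ++ t₂) = playResult n (fire n i v) p₁ := by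
            rw [g4, k2res]
          simpa using hfin

end Diamond

/-! ### Existence of a terminal play -/

section Terminal
variable {n : ℕ}

lemma exists_terminal_aux (hn : 3 ≤ n) [NeZero n] :
    ∀ (N : ℕ) (e : ZMod n ≃ ZMod n), (n-1) * (ww (n-1) * (n-1)) < Phi n e + N →
    ∃ p, IsPlay n (-1) (toConf n (fun j => ((e j).val : ℝ))) p ∧
      ∀ j, -1 ≤ playResult n (toConf n (fun j => ((e j).val : ℝ))) p j := by
  intro N
  induction N with
  | zero =>
    intro e h
    exact absurd (Phi_le n e) (by omega)
  | succ N IH =>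
    intro e h
    by_cases hterm : ∀ j, -1 ≤ toConf n (fun j => ((e j).val : ℝ)) j
    · exact ⟨[], trivial, fun j => hterm j⟩
    · push_neg at hterm
      obtain ⟨i, hi⟩ := hterm
      have hfire : (e (i+1)).val + 2 ≤ (e i).val := by
        have h1 : ((e (i+1)).val : ℝ) - ((e i).val : ℝ) < -1 := hi
        have h2 : ((e (i+1)).val : ℝ) + 1 < ((e i).val : ℝ) := by linarith
        have h3 : (e (i+1)).val + 1 < (e i).val := by exact_mod_cast h2
        omega
      have hkey : fire n i (toConf n (fun j => ((e j).val : ℝ)))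
          = toConf n (fun j => ((((Equiv.swap i (i+1)).trans e) j).val : ℝ)) := by
        rw [fire_toConf hn]
        rfl
      have hphi := phi_incr hn e i hfire
      obtain ⟨p, hp, hpt⟩ := IH ((Equiv.swap i (i+1)).trans e) (by omega)
      refine ⟨i :: p, ⟨hi, ?_⟩, fun j => ?_⟩
      · rw [hkey]; exact hp
      · rw [playResult_cons, hkey]; exact hpt j

end Terminal

/-! ### The main theorem -/

/-- For any integral configuration `u` reachable from `ρ^(0)`: (a) some `(<-1)`-play from
`u` ends at a configuration with no coordinate `< -1`; (b) any such play ends at `-ρ^(a)`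
for some `a`; (c) any two such plays have the same length and end at the same
configuration. -/
theorem strategy_from_reachable (n : ℕ) [NeZero n] (hn : 3 ≤ n) (u : ZMod n → ℝ)
    (hint : ∀ j, ∃ m : ℤ, u j = (m : ℝ))
    (hreach : ∃ p : List (ZMod n), IsPlay n 0 (rho n 0) p ∧ playResult n (rho n 0) p = u) :
    (∃ p : List (ZMod n), IsPlay n (-1) u p ∧ ∀ j, -1 ≤ playResult n u p j) ∧
    (∀ p : List (ZMod n), IsPlay n (-1) u p → (∀ j, -1 ≤ playResult n u p j) →
      ∃ a : ZMod n, playResult n u p = fun j => -(rho n a j)) ∧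
    (∀ p q : List (ZMod n),
      IsPlay n (-1) u p → (∀ j, -1 ≤ playResult n u p j) →
      IsPlay n (-1) u q → (∀ j, -1 ≤ playResult n u q j) →
      p.length = q.length ∧ playResult n u p = playResult n u q) := by
  have hNu : NiceCfg n u := by
    obtain ⟨p0, _, hres⟩ := hreach
    have h := niceCfg_playResult hn (nice_rho hn) p0
    rwa [hres] at h
  refine ⟨?_, ?_, ?_⟩
  · -- (a) existence
    obtain ⟨e, hu⟩ := hNu
    have hterm := exists_terminal_aux hn ((n-1) * (ww (n-1) * (n-1)) + 1) e (by omega)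
    rw [← hu] at hterm
    exact hterm
  · -- (b) staircase
    intro p hp hpt
    exact staircase hn (niceCfg_playResult hn hNu p) hpt
  · -- (c) uniqueness
    intro p q hp hpt hq hqt
    obtain ⟨t, ht1, ht2, ht3, ht4⟩ := strong hn p.length u hNu p hp hpt rfl q hq
    have htnil : t = [] := by
      cases t with
      | nil => rfl
      | cons x t' =>
        have h2 := (isPlay_append.mp ht1).2
        rw [isPlay_cons] at h2
        exact absurd (hqt x) (not_le.mpr h2.1)
    subst htnil
    rw [List.append_nil] at ht3 ht4
    exact ⟨ht3.symm, ht4.symm⟩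
end

section
/- Let n ≥ 3. Every legal play from ρ^(0) ending at a configuration of the form -ρ^(a) for some a ∈ ZMod n has length at least binomial(n,3). (Thus firing only vertices of amplitude strictly less than -1, which takes exactly binomial(n,3) moves, is the fastest way to play the numbers game from ρ^(0) to a configuration of the form -ρ^(a).) -/
/-!
A configuration reached from `ρ^(0)` is the discrete derivative of an arrangement of the labels
`0, …, n - 1` around the cycle `ZMod n` (the label at a position being its height), and firing `i`
swaps the labels at `i` and `i + 1`; the firing is legal iff the larger label comes first.
Lifting positions to integers as for affine permutations, the sum over label pairs `k' < k` of
the windings `⌊(p k' - p k) / n⌋` drops by exactly one at each legal firing, and no winding ever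
increases. Initially every winding is `-1`. At `-ρ^(a)` the labels are in decreasing order, and
then the adjacent windings being `≤ -1` forces the winding of `(k', k)` to be at most `k' - k`.
Summing `k - k' - 1` over all pairs gives `binomial(n, 3)`.
-/

open Finset

namespace Int

theorem ediv_add_eq_of_not_dvd {m a d : ℤ} (hm : 0 < m) (hd : |d| ≤ 1) (ha : ¬ m ∣ a)
    (had : ¬ m ∣ a + d) : (a + d) / m = a / m := by
  have hdecomp := emod_add_ediv_mul a m
  have hr0 : a % m ≠ 0 := fun h => ha (dvd_of_emod_eq_zero h)
  have hlow : a % m + d ≠ 0 := fun h => had ⟨a / m, by linarith⟩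
  have hhigh : a % m + d ≠ m := fun h => had ⟨a / m + 1, by linarith⟩
  have := emod_nonneg a hm.ne'
  have := emod_lt_of_pos a hm
  have := abs_le.mp hd
  rw [ediv_eq_iff_of_pos hm]
  omega

theorem sub_two_ediv_of_emod_eq_one {m a : ℤ} (hm : 0 < m) (ha : a % m = 1) :
    (a - 2) / m = a / m - 1 := by
  have hdecomp := emod_add_ediv_mul a m
  rw [ediv_eq_iff_of_pos hm, sub_mul]
  omega

end Int

theorem ZMod.natCast_ne_zero_of_lt {n k : ℕ} (h0 : 0 < k) (hk : k < n) : (k : ZMod n) ≠ 0 := by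
  rw [Ne, ZMod.natCast_eq_zero_iff]
  exact Nat.not_dvd_of_pos_of_lt h0 hk

theorem Nat.sum_range_choose_two (n : ℕ) : ∑ k ∈ range n, k.choose 2 = n.choose 3 := by
  induction n with
  | zero => rfl
  | succ n ih => rw [sum_range_succ, ih, Nat.choose_succ_succ' n 2, add_comm]

theorem Nat.sum_range_sub_sub_one (k : ℕ) : ∑ j ∈ range k, (k - j - 1) = k.choose 2 := by
  rw [Nat.choose_two_right, ← sum_range_id, ← sum_range_reflect (fun j : ℕ => j) k]
  exact sum_congr rfl fun j _ => by omega

namespace AffineNumbersGame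

variable {n : ℕ}

def heightConfig (h : ZMod n → ℝ) : ZMod n → ℝ := fun j => h (j + 1) - h j

theorem fire_heightConfig (hn : 3 ≤ n) (h : ZMod n → ℝ) (i : ZMod n) :
    fire n i (heightConfig h) = heightConfig (h ∘ Equiv.swap i (i + 1)) := by
  have h1 : ((1 : ℕ) : ZMod n) ≠ 0 := ZMod.natCast_ne_zero_of_lt one_pos (by omega)
  have h2 : ((2 : ℕ) : ZMod n) ≠ 0 := ZMod.natCast_ne_zero_of_lt two_pos (by omega)
  push_cast at h1 h2
  have hi1 : i + 1 ≠ i := fun h => h1 (by linear_combination h)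
  have hi2 : i + 1 + 1 ≠ i := fun h => h2 (by linear_combination h)
  have hi3 : i - 1 ≠ i + 1 := fun h => h2 (by linear_combination -h)
  have hi4 : i - 1 ≠ i := fun h => h1 (by linear_combination -h)
  have hi2' : i + 1 + 1 ≠ i + 1 := fun h => h1 (by linear_combination h)
  funext j
  simp only [fire, heightConfig, Function.comp]
  by_cases hj : j = i
  · subst hj
    simp only [A, if_true, Equiv.swap_apply_left, Equiv.swap_apply_right]
    push_cast
    ring
  by_cases hj' : j = i + 1
  · subst hj'
    simp only [A, hi1.symm, if_false, true_or, if_true, Equiv.swap_apply_right,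
      Equiv.swap_apply_of_ne_of_ne hi2 hi2']
    push_cast
    ring
  by_cases hj'' : j = i - 1
  · subst hj''
    simp only [A, hi4.symm, if_false, or_true, if_true, sub_add_cancel, Equiv.swap_apply_left,
      Equiv.swap_apply_of_ne_of_ne hi4 hi3]
    push_cast
    ring
  · have hA : A n i j = 0 := by
      simp only [A, Ne.symm hj, hj', hj'', if_false, or_self]
    have hj1 : j + 1 ≠ i := fun h => hj'' (by linear_combination h)
    have hj2 : j + 1 ≠ i + 1 := fun h => hj (by linear_combination h)
    rw [hA, Equiv.swap_apply_of_ne_of_ne hj hj', Equiv.swap_apply_of_ne_of_ne hj1 hj2]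
    simp

def arrangementConfig (e : Fin n ≃ ZMod n) : ZMod n → ℝ :=
  heightConfig fun j => ((e.symm j : ℕ) : ℝ)

theorem fire_arrangementConfig (hn : 3 ≤ n) (e : Fin n ≃ ZMod n) (i : ZMod n) :
    fire n i (arrangementConfig e) = arrangementConfig (e.trans (Equiv.swap i (i + 1))) := by
  rw [arrangementConfig, fire_heightConfig hn]
  simp only [arrangementConfig, Equiv.symm_trans_apply, Equiv.symm_swap]
  rfl

theorem symm_lt_of_arrangementConfig_neg {e : Fin n ≃ ZMod n} {i : ZMod n}
    (hi : arrangementConfig e i < 0) : e.symm (i + 1) < e.symm i := by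
  rw [arrangementConfig, heightConfig, sub_neg, Nat.cast_lt] at hi
  exact hi

def IsLift (e : Fin n ≃ ZMod n) (p : Fin n → ℤ) : Prop :=
  ∀ k, (p k : ZMod n) = e k

theorem IsLift.intCast_sub_ne_zero {e : Fin n ≃ ZMod n} {p : Fin n → ℤ} (hp : IsLift e p)
    {k' k : Fin n} (hk : k' ≠ k) : ((p k' - p k : ℤ) : ZMod n) ≠ 0 := by
  rw [Int.cast_sub, hp, hp, sub_ne_zero]
  exact e.injective.ne hk

/-- The change of the lift under `fire n i`. -/
def liftShift (e : Fin n ≃ ZMod n) (i : ZMod n) (k : Fin n) : ℤ :=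
  if e k = i then 1 else if e k = i + 1 then -1 else 0

theorem IsLift.fire {e : Fin n ≃ ZMod n} {p : Fin n → ℤ} (hp : IsLift e p) (i : ZMod n) :
    IsLift (e.trans (Equiv.swap i (i + 1))) (p + liftShift e i) := by
  intro k
  simp only [Pi.add_apply, Int.cast_add, hp k, liftShift, Equiv.trans_apply]
  split_ifs with h1 h2
  · rw [h1, Equiv.swap_apply_left, Int.cast_one]
  · rw [h2, Equiv.swap_apply_right, Int.cast_neg, Int.cast_one, add_neg_cancel_right]
  · rw [Equiv.swap_apply_of_ne_of_ne h1 h2, Int.cast_zero, add_zero]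

def winding (p : Fin n → ℤ) (k' k : Fin n) : ℤ := (p k' - p k) / n

def increasingPairs (n : ℕ) : Finset (Fin n × Fin n) := {x | x.1 < x.2}

@[simp]
theorem mem_increasingPairs {x : Fin n × Fin n} : x ∈ increasingPairs n ↔ x.1 < x.2 := by
  simp [increasingPairs]

def totalWinding (p : Fin n → ℤ) : ℤ := ∑ x ∈ increasingPairs n, winding p x.1 x.2

theorem winding_fire (hn : 1 < n) {e : Fin n ≃ ZMod n} {p : Fin n → ℤ} (hp : IsLift e p)
    {i : ZMod n} (hi : e.symm (i + 1) < e.symm i) {k' k : Fin n} (hk : k' < k) :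
    winding (p + liftShift e i) k' k =
      winding p k' k - if (k', k) = (e.symm (i + 1), e.symm i) then 1 else 0 := by
  have hn0 : (0 : ℤ) < n := by omega
  have hi1 : i + 1 ≠ i := fun h => ZMod.natCast_ne_zero_of_lt (n := n) one_pos (by omega)
    (by push_cast; linear_combination h)
  have hsplit : (p + liftShift e i) k' - (p + liftShift e i) k =
      (p k' - p k) + (liftShift e i k' - liftShift e i k) := by
    simp only [Pi.add_apply]; ring
  rw [winding, winding, hsplit]
  split_ifs with hswap
  · obtain ⟨rfl, rfl⟩ := Prod.mk.inj hswap
    have hshift : liftShift e i (e.symm (i + 1)) - liftShift e i (e.symm i) = -2 := by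
      simp only [liftShift, Equiv.apply_symm_apply, hi1, if_false, if_true]
      norm_num
    have hres : (p (e.symm (i + 1)) - p (e.symm i)) % (n : ℤ) = 1 := by
      have h := (ZMod.intCast_eq_intCast_iff' (p (e.symm (i + 1)) - p (e.symm i)) 1 n).1 (by
        rw [Int.cast_sub, hp, hp]; simp)
      rw [h, Int.emod_eq_of_lt zero_le_one (by omega)]
    rw [hshift, ← sub_eq_add_neg, Int.sub_two_ediv_of_emod_eq_one hn0 hres]
  · -- the difference moves by at most one and stays nonzero mod `n`: no multiple of `n` is crossed
    rw [sub_zero]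
    refine Int.ediv_add_eq_of_not_dvd hn0 ?_ ?_ ?_
    · have hnot_rev : e k' = i → e k ≠ i + 1 := fun h h' => by
        rw [← Equiv.eq_symm_apply] at h h'
        exact absurd (h ▸ h' ▸ hk) (not_lt.2 hi.le)
      have hnot_swap : e k' = i + 1 → e k ≠ i := fun h h' => by
        rw [← Equiv.eq_symm_apply] at h h'
        exact hswap (by rw [h, h'])
      simp only [liftShift]
      split_ifs <;> simp_all
    · rw [← ZMod.intCast_zmod_eq_zero_iff_dvd]
      exact hp.intCast_sub_ne_zero hk.ne
    · rw [← ZMod.intCast_zmod_eq_zero_iff_dvd, ← hsplit]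
      exact (hp.fire i).intCast_sub_ne_zero hk.ne

theorem totalWinding_fire (hn : 1 < n) {e : Fin n ≃ ZMod n} {p : Fin n → ℤ} (hp : IsLift e p)
    {i : ZMod n} (hi : e.symm (i + 1) < e.symm i) :
    totalWinding (p + liftShift e i) = totalWinding p - 1 := by
  rw [totalWinding, totalWinding,
    sum_congr rfl fun x hx => winding_fire (by omega) hp hi (mem_increasingPairs.1 hx),
    sum_sub_distrib, sum_ite_eq' (increasingPairs n) _ fun _ => (1 : ℤ)]
  simp [hi]

theorem exists_lift_of_isPlay (hn : 3 ≤ n) (l : List (ZMod n)) :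
    ∀ (e : Fin n ≃ ZMod n) (p : Fin n → ℤ), IsLift e p → IsPlay n 0 (arrangementConfig e) l →
      ∃ e' p', IsLift e' p' ∧ playResult n (arrangementConfig e) l = arrangementConfig e' ∧
        totalWinding p' + l.length = totalWinding p ∧
        ∀ {k' k : Fin n}, k' < k → winding p' k' k ≤ winding p k' k := by
  induction l with
  | nil => exact fun e p hp _ => ⟨e, p, hp, rfl, by simp, fun _ => le_rfl⟩
  | cons i l ih =>
    rintro e p hp ⟨hi, hplay⟩
    replace hi := symm_lt_of_arrangementConfig_neg hi
    rw [fire_arrangementConfig hn] at hplay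
    obtain ⟨e', p', hp', hres, hpot, hle⟩ := ih _ _ (hp.fire i) hplay
    refine ⟨e', p', hp', by rw [playResult, fire_arrangementConfig hn, hres], ?_, fun hk => ?_⟩
    · rw [totalWinding_fire (by omega) hp hi] at hpot
      rw [List.length_cons, Nat.cast_succ]
      linarith
    · refine (hle hk).trans ?_
      rw [winding_fire (by omega) hp hi hk]
      split_ifs <;> simp

/-- Label `k` sits at position `k + 1`, so that the heights give `ρ^(0)`. -/
def initialArrangement (n : ℕ) [NeZero n] : Fin n ≃ ZMod n where
  toFun k := (k : ℕ) + 1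
  invFun j := ⟨(j - 1).val, ZMod.val_lt _⟩
  left_inv k := Fin.ext (by simp [ZMod.val_natCast_of_lt k.isLt])
  right_inv j := by simp

def initialLift (n : ℕ) (k : Fin n) : ℤ := (k : ℕ) + 1

theorem isLift_initialLift [NeZero n] : IsLift (initialArrangement n) (initialLift n) := by
  intro k
  simp [initialArrangement, initialLift]

theorem arrangementConfig_initialArrangement [NeZero n] :
    arrangementConfig (initialArrangement n) = rho n 0 := by
  funext j
  have hcast : (((j - 1).val + 1 : ℕ) : ZMod n) = j := by simp
  simp only [arrangementConfig, heightConfig, initialArrangement, Equiv.coe_fn_symm_mk,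
    add_sub_cancel_right, rho]
  rcases (Nat.lt_iff_add_one_le.1 (ZMod.val_lt (j - 1))).lt_or_eq with h | h
  · have hj : j.val = (j - 1).val + 1 := by rw [← ZMod.val_natCast_of_lt h, hcast]
    rw [if_neg fun h0 => by simp [h0] at hj, hj]
    push_cast
    ring
  · have hj : j = 0 := by rw [← hcast, h, ZMod.natCast_self]
    subst hj
    have h' : (((0 - 1 : ZMod n).val : ℕ) : ℝ) + 1 = n := by exact_mod_cast h
    rw [if_pos rfl, ZMod.val_zero, Nat.cast_zero]
    linarith

theorem winding_initialLift {k' k : Fin n} (hk : k' < k) : winding (initialLift n) k' k = -1 := by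
  have := Fin.lt_def.1 hk
  have := k.isLt
  rw [winding, initialLift, initialLift, Int.ediv_eq_iff_of_pos (by omega)]
  omega

theorem eq_sub_of_arrangementConfig_eq_neg_rho {e : Fin n ≃ ZMod n} {a : ZMod n}
    (he : arrangementConfig e = fun j => -rho n a j) (k : Fin n) : e k = a - (k : ℕ) := by
  set label : ZMod n → ℕ := fun j => (e.symm j : ℕ) with label_def
  have hstep : ∀ s : ℕ, s + 1 < n → label (a + 1 + (s + 1 : ℕ)) + 1 = label (a + 1 + s) := by
    intro s hs
    have hne : a + 1 + (s : ZMod n) ≠ a := fun h' =>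
      ZMod.natCast_ne_zero_of_lt s.succ_pos hs (by push_cast; linear_combination h')
    have hval := congrFun he (a + 1 + s)
    simp only [arrangementConfig, heightConfig, rho, if_neg hne] at hval
    have : (label (a + 1 + (s + 1 : ℕ)) : ℝ) + 1 = label (a + 1 + s) := by
      simp only [label_def]
      push_cast
      rw [← add_assoc]
      linarith
    exact_mod_cast this
  have htel : ∀ s : ℕ, s < n → label (a + 1 + s) + s = label (a + 1) := by
    intro s
    induction s with
    | zero => simp
    | succ s ih =>
      intro hs
      have := hstep s hs
      have := ih (by omega)
      omega
  have hlt : ∀ j, label j < n := fun j => (e.symm j).isLt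
  -- from position `a + 1` on, the `n` labels drop by one at each step, so they run `n - 1, …, 0`
  have hk : label (a + 1 + (n - 1 - k : ℕ)) = k := by
    have := k.isLt
    have := htel (n - 1) (by omega)
    have := hlt (a + 1 + (n - 1 : ℕ))
    have := htel (n - 1 - k) (by omega)
    have := hlt (a + 1)
    omega
  have hpos : a + 1 + ((n - 1 - k : ℕ) : ZMod n) = a - (k : ℕ) := by
    rw [Nat.cast_sub (by omega), Nat.cast_sub (by omega), ZMod.natCast_self]
    ring
  rw [hpos] at hk
  exact ((Equiv.symm_apply_eq e).1 (Fin.ext hk)).symm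

theorem winding_le_of_intCast_eq {q : Fin n → ℤ} {a : ZMod n}
    (hq : ∀ k, (q k : ZMod n) = a - (k : ℕ))
    (hadj : ∀ k' k : Fin n, k' ⋖ k → winding q k' k ≤ -1) {k' k : Fin n} (hk : k' < k) :
    winding q k' k ≤ (k' : ℕ) - (k : ℕ) := by
  -- all `q k + k` are congruent to `a`, so windings are differences of the quotients `t k`
  set t : Fin n → ℤ := fun k => (q k + (k : ℕ)) / n
  have hdvd : ∀ k' k : Fin n, (n : ℤ) ∣ (q k' + (k' : ℕ)) - (q k + (k : ℕ)) := fun k' k =>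
    (ZMod.intCast_eq_intCast_iff_dvd_sub _ _ n).1 (by push_cast [hq]; ring)
  have hterm : ∀ {k' k : Fin n}, k' < k → winding q k' k = t k' - t k := by
    intro k' k hk
    have := Fin.lt_def.1 hk
    have := k.isLt
    rw [winding, show q k' - q k = (q k' + (k' : ℕ)) - (q k + (k : ℕ)) + ((k : ℕ) - (k' : ℕ) : ℤ)
      by ring, Int.add_ediv_of_dvd_left (hdvd k' k), Int.sub_ediv_of_dvd_sub (hdvd k' k),
      Int.ediv_eq_zero_of_lt (a := (k : ℕ) - (k' : ℕ)) (by omega) (by omega), add_zero]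
  have hmono : Monotone fun k : Fin n => t k - (k : ℕ) := by
    refine (monotone_iff_forall_covBy _).2 fun k' k hcov => ?_
    have hsucc : (k' : ℕ) + 1 = k := Nat.covBy_iff_add_one_eq.1 (Fin.covBy_iff.1 hcov)
    have := hadj k' k hcov
    rw [hterm hcov.lt] at this
    simp only [← hsucc, Nat.cast_succ]
    linarith
  have := hmono hk.le
  simp only at this
  rw [hterm hk]
  linarith

theorem sum_increasingPairs (n : ℕ) :
    ∑ x ∈ increasingPairs n, ((x.2 : ℕ) - x.1 - 1) = n.choose 3 := by
  rw [increasingPairs, sum_filter, Fintype.sum_prod_type, sum_comm, ← Nat.sum_range_choose_two,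
    ← Fin.sum_univ_eq_sum_range]
  refine sum_congr rfl fun k _ => ?_
  simp only [Fin.lt_def]
  rw [Fin.sum_univ_eq_sum_range (fun j => if j < (k : ℕ) then (k : ℕ) - j - 1 else 0),
    ← sum_filter, ← Nat.sum_range_sub_sub_one]
  congr 1
  ext j
  simp only [mem_filter, mem_range]
  omega

theorem choose_three_le_totalWinding_sub {q : Fin n → ℤ} {a : ZMod n}
    (hq : ∀ k, (q k : ZMod n) = a - (k : ℕ))
    (hle : ∀ {k' k : Fin n}, k' < k → winding q k' k ≤ winding (initialLift n) k' k) :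
    (n.choose 3 : ℤ) ≤ totalWinding (initialLift n) - totalWinding q := by
  rw [totalWinding, totalWinding, ← sum_sub_distrib, ← sum_increasingPairs, Nat.cast_sum]
  refine sum_le_sum fun x hx => ?_
  rw [mem_increasingPairs] at hx
  have := winding_le_of_intCast_eq hq
    (fun k' k hcov => (hle hcov.lt).trans_eq (winding_initialLift hcov.lt)) hx
  have := Fin.lt_def.1 hx
  rw [winding_initialLift hx]
  omega

end AffineNumbersGame

/-- Every legal play from `ρ^(0)` ending at a configuration of the form `-ρ^(a)` has
length at least `binomial(n,3)`. -/
theorem fastest_way_to_neg_rho (n : ℕ) [NeZero n] (hn : 3 ≤ n)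
    (p : List (ZMod n)) (hp : IsPlay n 0 (rho n 0) p)
    (hend : ∃ a : ZMod n, playResult n (rho n 0) p = fun j => -(rho n a j)) :
    n.choose 3 ≤ p.length := by
  open AffineNumbersGame in
  obtain ⟨a, ha⟩ := hend
  rw [← arrangementConfig_initialArrangement] at hp ha
  obtain ⟨e, q, hq, hres, hpot, hle⟩ :=
    exists_lift_of_isPlay hn p _ _ isLift_initialLift hp
  have he := eq_sub_of_arrangementConfig_eq_neg_rho (hres.symm.trans ha)
  have hbound := choose_three_le_totalWinding_sub (fun k => (hq k).trans (he k)) hle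
  omega
end

section
/- Let n ≥ 3 and let κ be a real number with 1 < κ < 1 + 1/(n-2). Then some legal play from u_κ ends at a configuration all of whose coordinates are nonnegative, and every legal play from u_κ ending at a configuration with all coordinates nonnegative ends at the configuration v* given by v* ι0 = κ - (κ-1)(n-1) and v* x = κ - 1 for all x ≠ ι0 (that is, v* = (κ-1)·ρ^(ι0) + κ·e_{ι0}, where e_{ι0} is the indicator function of ι0). -/
/-- The configuration `u_κ = ρ^(0) + κ·e_0`. -/
def ukappa (n : ℕ) (κ : ℝ) : ZMod n → ℝ :=
  fun j => if j = 0 then κ - ((n : ℝ) - 1) else 1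

/-!
A configuration `v` is the sequence of differences `v k = P k - P (k + 1)` of a potential
`P : ℤ → ℝ`, and firing `i` exchanges the values of `P` at `k` and `k + 1` for every `k ≡ i`.
For `u_κ` the values of `P` are the numbers `j - mκ` (`0 ≤ j < n`, `m ∈ ℤ`), which for
`1 < κ < 1 + 1/(n-2)` are enumerated decreasingly by `level`. Hence every configuration obtained
from `u_κ` by firings has a potential `level ∘ g` with `g` an affine permutation, and firing a
negative vertex exchanges a descent `g (p + 1) < g p`, which lowers `∑_{k<n} (g k - k)²`: the game
terminates. At a nonnegative configuration `g` is increasing, hence a translation, and the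
translation is fixed by the invariant `∑_{k<n} (g k - k)`, which puts the large value at `ι0`.
-/

open Finset Function

theorem Int.add_one_ediv_of_pos {q d : ℤ} (hd : 0 < d) :
    (q + 1) / d = q / d + if d ∣ q + 1 then 1 else 0 := by
  have h := Int.emod_add_mul_ediv q d
  have h0 := Int.emod_nonneg q hd.ne'
  have h1 := Int.emod_lt_of_pos q hd
  rcases (by omega : q % d + 1 < d ∨ q % d + 1 = d) with hj | hj
  · have := (Int.ediv_emod_unique hd).2
      ⟨(show q % d + 1 + d * (q / d) = q + 1 by omega), by omega, hj⟩
    rw [if_neg (by rw [Int.dvd_iff_emod_eq_zero, this.2]; omega), this.1, add_zero]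
  · have := (Int.ediv_emod_unique hd).2
      ⟨(show 0 + d * (q / d + 1) = q + 1 by linarith), le_rfl, hd⟩
    rw [if_pos (Int.dvd_iff_emod_eq_zero.2 this.2), this.1]

theorem Int.eq_add_of_lt_add_one_of_add_period {n : ℕ} (hn : 0 < n) {g : ℤ → ℤ}
    (hg : ∀ k, g k < g (k + 1)) (hper : ∀ k, g (k + n) = g k + n) (k : ℤ) : g k = k + g 0 := by
  have hmono : Monotone fun k => g k - k := monotone_int_of_le_succ fun k => by
    have := hg k
    omega
  -- `g k - k` is monotone and `n`-periodic, hence constant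
  have hstep : ∀ k, g (k + 1) = g k + 1 := fun k => by
    have hle := hmono (show k + 1 ≤ k + n by omega)
    simp only [hper] at hle
    linarith [hg k]
  induction k using Int.induction_on with
  | zero => simp
  | succ k ih => rw [hstep, ih]; ring
  | pred k ih => have := hstep (-k - 1); rw [sub_add_cancel] at this; omega

theorem ZMod.two_ne_zero_of_two_lt {n : ℕ} (hn : 2 < n) : (2 : ZMod n) ≠ 0 := by
  intro h
  have := Nat.le_of_dvd two_pos ((ZMod.natCast_eq_zero_iff 2 n).1 (by exact_mod_cast h))
  omega

section Periodic

variable {n : ℕ} {M : Type*}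

theorem Finset.sum_range_eq_sum_zmod_val [AddCommMonoid M] [NeZero n] (f : ℕ → M) :
    ∑ k ∈ range n, f k = ∑ x : ZMod n, f x.val := by
  obtain ⟨m, rfl⟩ := Nat.exists_eq_succ_of_ne_zero (NeZero.ne n)
  exact (Fin.sum_univ_eq_sum_range f _).symm

theorem Function.Periodic.eq_of_intCast_eq {D : ℤ → M} (hD : Periodic D n) {a b : ℤ}
    (h : (a : ZMod n) = b) : D a = D b := by
  obtain ⟨m, hm⟩ := (ZMod.intCast_eq_intCast_iff_dvd_sub a b n).1 h
  rw [show b = a + m * n by linarith]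
  exact (by simpa using hD.int_mul m a : D (a + m * n) = D a).symm

theorem Function.Periodic.sum_range_eq_add [AddCommMonoid M] [NeZero n] {D : ℤ → M}
    (hD : Periodic D n) {i : ZMod n} (hi : i ≠ i + 1)
    (hD0 : ∀ k : ℤ, (k : ZMod n) ≠ i → (k : ZMod n) ≠ i + 1 → D k = 0)
    {p : ℤ} (hp : (p : ZMod n) = i) :
    ∑ k ∈ range n, D k = D p + D (p + 1) := by
  rw [sum_range_eq_sum_zmod_val (fun k => D k), Fintype.sum_eq_add i (i + 1) hi]
  · congr 1 <;> apply hD.eq_of_intCast_eq <;> simp [hp]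
  · rintro x ⟨h₁, h₂⟩
    apply hD0 <;> simpa

end Periodic

namespace NumbersGame

variable {n : ℕ}

/-- The simple reflection `s_i` of the affine symmetric group, acting on `ℤ`. -/
def affineSwap (n : ℕ) (i : ZMod n) (k : ℤ) : ℤ :=
  if (k : ZMod n) = i then k + 1 else if (k : ZMod n) = i + 1 then k - 1 else k

section affineSwap

variable {i : ZMod n} {k : ℤ}

theorem affineSwap_of_eq (h : (k : ZMod n) = i) : affineSwap n i k = k + 1 := if_pos h

theorem affineSwap_of_eq_add_one [Fact (1 < n)] (h : (k : ZMod n) = i + 1) :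
    affineSwap n i k = k - 1 := by
  rw [affineSwap, if_neg (by simp [h]), if_pos h]

theorem affineSwap_of_ne (h₁ : (k : ZMod n) ≠ i) (h₂ : (k : ZMod n) ≠ i + 1) :
    affineSwap n i k = k := by
  rw [affineSwap, if_neg h₁, if_neg h₂]

theorem affineSwap_add_period (k : ℤ) : affineSwap n i (k + n) = affineSwap n i k + n := by
  simp only [affineSwap, Int.cast_add, Int.cast_natCast, ZMod.natCast_self, add_zero]
  split_ifs <;> ring

theorem affineSwap_involutive [Fact (1 < n)] : Involutive (affineSwap n i) := by
  intro k
  by_cases h₁ : (k : ZMod n) = i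
  · rw [affineSwap_of_eq h₁, affineSwap_of_eq_add_one (by push_cast; rw [h₁]),
      add_sub_cancel_right]
  by_cases h₂ : (k : ZMod n) = i + 1
  · rw [affineSwap_of_eq_add_one h₂, affineSwap_of_eq (by push_cast; rw [h₂]; ring),
      sub_add_cancel]
  · rw [affineSwap_of_ne h₁ h₂, affineSwap_of_ne h₁ h₂]

end affineSwap

theorem fire_apply_of_eq_sub (hn : 3 ≤ n) {v : ZMod n → ℝ} {P : ℤ → ℝ}
    (hv : ∀ k : ℤ, v k = P k - P (k + 1)) (i : ZMod n) (k : ℤ) :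
    fire n i v k = P (affineSwap n i k) - P (affineSwap n i (k + 1)) := by
  have : Fact (1 < n) := ⟨by omega⟩
  have h₁ : (1 : ZMod n) ≠ 0 := one_ne_zero
  have h₂ : (2 : ZMod n) ≠ 0 := ZMod.two_ne_zero_of_two_lt hn
  simp only [fire, A]
  by_cases hk : (k : ZMod n) = i
  · rw [if_pos hk.symm, affineSwap_of_eq hk, affineSwap_of_eq_add_one (by push_cast; rw [hk]),
      ← hk, hv, add_sub_cancel_right]
    ring
  by_cases hk₁ : (k : ZMod n) = i + 1
  · have hi : (((k - 1 : ℤ)) : ZMod n) = i := by push_cast; rw [hk₁]; ring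
    rw [if_neg (by rw [hk₁]; simp [h₁]), if_pos (Or.inl hk₁), affineSwap_of_eq_add_one hk₁,
      affineSwap_of_ne (by push_cast; rw [hk₁]; exact fun h => h₂ (by linear_combination h))
        (by push_cast; rw [hk₁]; exact fun h => h₁ (by linear_combination h)), ← hi, hv, hv,
      sub_add_cancel]
    push_cast; ring
  by_cases hk₂ : (k : ZMod n) = i - 1
  · have hi : (((k + 1 : ℤ)) : ZMod n) = i := by push_cast; rw [hk₂]; ring
    rw [if_neg (by rw [hk₂]; exact fun h => h₁ (by linear_combination h)), if_pos (Or.inr hk₂),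
      affineSwap_of_ne hk hk₁, affineSwap_of_eq hi, ← hi, hv, hv]
    push_cast; ring
  · rw [if_neg (Ne.symm hk), if_neg (not_or.2 ⟨hk₁, hk₂⟩), affineSwap_of_ne hk hk₁,
      affineSwap_of_ne (by push_cast; exact fun h => hk₂ (by linear_combination h))
        (by push_cast; exact fun h => hk (by linear_combination h)), hv]
    push_cast; ring

def displacement (n : ℕ) (g : ℤ → ℤ) : ℤ := ∑ k ∈ range n, (g k - k)

def energy (n : ℕ) (g : ℤ → ℤ) : ℤ := ∑ k ∈ range n, (g k - k) ^ 2

theorem energy_nonneg (g : ℤ → ℤ) : 0 ≤ energy n g := by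
  unfold energy
  positivity

section Window

variable [Fact (1 < n)] {g : ℤ → ℤ}

theorem sum_range_comp_affineSwap {M : Type*} [AddCommGroup M] (f : ℤ → M)
    (hg : ∀ k, g (k + n) = g k + n) (p : ℤ) :
    ∑ k ∈ range n, f (g (affineSwap n p k) - k) = ∑ k ∈ range n, f (g k - k)
      + (f (g (p + 1) - p) - f (g p - p)) + (f (g p - (p + 1)) - f (g (p + 1) - (p + 1))) := by
  have hD : Periodic (fun k => f (g (affineSwap n p k) - k) - f (g k - k)) n := fun k => by
    simp only [affineSwap_add_period, hg, add_sub_add_right_eq_sub]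
  rw [add_assoc, ← sub_eq_iff_eq_add', ← sum_sub_distrib,
    hD.sum_range_eq_add (by simp) (fun k h₁ h₂ => by rw [affineSwap_of_ne h₁ h₂, sub_self]) rfl,
    affineSwap_of_eq rfl, affineSwap_of_eq_add_one (by push_cast; rfl), add_sub_cancel_right]

theorem displacement_comp_affineSwap (hg : ∀ k, g (k + n) = g k + n) (i : ZMod n) :
    displacement n (g ∘ affineSwap n i) = displacement n g := by
  obtain ⟨p, rfl⟩ := ZMod.intCast_surjective i
  have := sum_range_comp_affineSwap id hg p
  simp only [displacement, comp_apply, id] at this ⊢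
  rw [this]
  ring

theorem energy_comp_affineSwap (hg : ∀ k, g (k + n) = g k + n) (p : ℤ) :
    energy n (g ∘ affineSwap n p) + 2 * (g p - g (p + 1)) = energy n g := by
  simp only [energy, comp_apply, sum_range_comp_affineSwap (· ^ 2) hg p]
  ring

end Window

/-- The decreasing enumeration of `{j - m κ | 0 ≤ j < n, m ∈ ℤ}`:
`level n κ (j + n * a) = j - (j + a) κ` for `0 ≤ j < n`. -/
def level (n : ℕ) (κ : ℝ) (q : ℤ) : ℝ := ((q % n : ℤ) : ℝ) * (1 - κ) - ((q / n : ℤ) : ℝ) * κ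

theorem level_sub_level_add_one {κ : ℝ} (hn : 0 < n) (q : ℤ) :
    level n κ q - level n κ (q + 1) =
      if (n : ℤ) ∣ q + 1 then (n - 1) - (n - 2) * κ else κ - 1 := by
  rw [level, level, Int.emod_def, Int.emod_def, Int.add_one_ediv_of_pos (by omega)]
  split_ifs <;> push_cast <;> ring

theorem level_strictAnti {κ : ℝ} (hn : 0 < n) (hκ : 1 < κ) (hκn : (n - 2) * κ < n - 1) :
    StrictAnti (level n κ) :=
  strictAnti_int_of_succ_lt fun q => by
    have := level_sub_level_add_one (κ := κ) hn q
    split_ifs at this <;> linarith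

/-- The affine permutation sorting the potential of `u_κ` into the order of `level`. -/
def initPerm (n : ℕ) (k : ℤ) : ℤ := (n - 1) * k + n * (n - 2) * (-k / n)

theorem level_initPerm (hn : 0 < n) (κ : ℝ) (k : ℤ) :
    level n κ (initPerm n k) = -(-k / n : ℤ) * (n - κ) - k := by
  have hdiv : initPerm n k / n = k + (n - 1) * (-k / n) := by
    rw [show initPerm n k = -k + n * (k + (n - 2) * (-k / n)) by unfold initPerm; ring,
      Int.add_mul_ediv_left _ _ (by omega)]
    ring
  rw [level, Int.emod_def, hdiv, initPerm]
  push_cast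
  ring

theorem initPerm_add_mul (hn : 0 < n) (k t : ℤ) :
    initPerm n (k + n * t) = initPerm n k + n * t := by
  rw [initPerm, initPerm, show -(k + n * t) = -k + n * -t by ring,
    Int.add_mul_ediv_left _ _ (by omega)]
  ring

theorem initPerm_injective (hn : 0 < n) : Injective (initPerm n) := by
  intro k k' h
  have hcast : (k : ZMod n) = k' := by
    simpa [initPerm] using congrArg (Int.cast : ℤ → ZMod n) h
  obtain ⟨t, ht⟩ := (ZMod.intCast_eq_intCast_iff_dvd_sub k k' n).1 hcast
  rw [show k' = k + n * t by omega, initPerm_add_mul hn] at h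
  linarith

theorem two_mul_displacement_initPerm (hn : 0 < n) :
    2 * displacement n (initPerm n) = -(n * (n - 1) * (n - 2)) := by
  obtain ⟨m, rfl⟩ : ∃ m, n = m + 1 := ⟨n - 1, by omega⟩
  have hfloor : ∀ k ∈ range m, -((k + 1 : ℕ) : ℤ) / ((m + 1 : ℕ) : ℤ) = -1 := fun k hk =>
    ((Int.ediv_emod_unique (by omega)).2
      ⟨(show (m - k : ℤ) + (m + 1 : ℕ) * -1 = -((k + 1 : ℕ) : ℤ) by push_cast; ring),
        by simp at hk; omega, by simp at hk; omega⟩).1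
  have hgauss : (∑ k ∈ range m, ((k + 1 : ℕ) : ℤ)) * 2 = (m + 1) * m := by
    have := Finset.sum_range_id_mul_two (m + 1)
    rw [sum_range_succ'] at this
    exact_mod_cast this
  simp only [displacement, initPerm, sum_range_succ' _ m]
  rw [sum_congr rfl fun k hk => by rw [hfloor k hk]]
  simp only [sum_sub_distrib, sum_add_distrib, ← mul_sum, sum_const, card_range, Nat.cast_zero,
    neg_zero, Int.zero_ediv]
  push_cast at hgauss ⊢
  linear_combination (m - 1 : ℤ) * hgauss

theorem intCast_neg_add_one_eq_iota0 {d : ℤ} (hd : 2 * d = -((n - 1) * (n - 2))) :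
    ((-(d + 1) : ℤ) : ZMod n) = iota0 n := by
  rw [iota0]
  split_ifs with hn
  · obtain ⟨m, rfl⟩ := hn
    rw [show (m + m) / 2 = m by omega, ← Int.cast_natCast, ZMod.intCast_eq_intCast_iff_dvd_sub]
    exact ⟨2 - m, by push_cast at hd ⊢; nlinarith⟩
  · obtain ⟨m, rfl⟩ := Nat.not_even_iff_odd.1 hn
    rw [ZMod.intCast_zmod_eq_zero_iff_dvd]
    exact ⟨m - 1, by push_cast at hd ⊢; nlinarith⟩

structure Encodes (n : ℕ) (κ : ℝ) (v : ZMod n → ℝ) (g : ℤ → ℤ) : Prop where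
  injective : Injective g
  add_period : ∀ k, g (k + n) = g k + n
  apply_eq : ∀ k : ℤ, v k = level n κ (g k) - level n κ (g (k + 1))

theorem encodes_ukappa (hn : 1 < n) (κ : ℝ) : Encodes n κ (ukappa n κ) (initPerm n) where
  injective := initPerm_injective (by omega)
  add_period k := by simpa using initPerm_add_mul (n := n) (by omega) k 1
  apply_eq k := by
    have hstep := Int.add_one_ediv_of_pos (q := -k - 1) (d := n) (by omega)
    simp only [sub_add_cancel, dvd_neg] at hstep
    rw [level_initPerm (by omega), level_initPerm (by omega), neg_add', hstep, ukappa]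
    simp only [ZMod.intCast_zmod_eq_zero_iff_dvd]
    split_ifs <;> push_cast <;> ring

namespace Encodes

variable {κ : ℝ} {v : ZMod n → ℝ} {g : ℤ → ℤ}

theorem fire (hn : 3 ≤ n) (h : Encodes n κ v g) (i : ZMod n) :
    Encodes n κ (_root_.fire n i v) (g ∘ affineSwap n i) := by
  have : Fact (1 < n) := ⟨by omega⟩
  exact ⟨h.injective.comp affineSwap_involutive.injective,
    fun k => by simp [affineSwap_add_period, h.add_period],
    fire_apply_of_eq_sub hn h.apply_eq i⟩

theorem exists_playResult (hn : 3 ≤ n) (h : Encodes n κ v g) (l : List (ZMod n)) :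
    ∃ g', Encodes n κ (playResult n v l) g' ∧ displacement n g' = displacement n g := by
  have : Fact (1 < n) := ⟨by omega⟩
  induction l generalizing v g with
  | nil => exact ⟨g, h, rfl⟩
  | cons i l ih =>
    obtain ⟨g', h', hd⟩ := ih (h.fire hn i)
    exact ⟨g', h', hd.trans (displacement_comp_affineSwap h.add_period i)⟩

theorem apply_add_one_lt (hn : 0 < n) (hκ : 1 < κ) (hκn : (n - 2) * κ < n - 1)
    (h : Encodes n κ v g) {k : ℤ} (hk : v k < 0) : g (k + 1) < g k := by
  rw [← (level_strictAnti hn hκ hκn).lt_iff_gt]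
  linarith [h.apply_eq k]

theorem apply_lt_apply_add_one (hn : 0 < n) (hκ : 1 < κ) (hκn : (n - 2) * κ < n - 1)
    (h : Encodes n κ v g) {k : ℤ} (hk : 0 ≤ v k) : g k < g (k + 1) := by
  refine lt_of_le_of_ne ?_ (h.injective.ne (by simp))
  rw [← (level_strictAnti hn hκ hκn).le_iff_ge]
  linarith [h.apply_eq k]

theorem energy_fire_lt (hn : 3 ≤ n) (hκ : 1 < κ) (hκn : (n - 2) * κ < n - 1)
    (h : Encodes n κ v g) {i : ZMod n} (hi : v i < 0) :
    energy n (g ∘ affineSwap n i) < energy n g := by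
  have : Fact (1 < n) := ⟨by omega⟩
  obtain ⟨p, rfl⟩ := ZMod.intCast_surjective i
  linarith [energy_comp_affineSwap h.add_period p, h.apply_add_one_lt (by omega) hκ hκn hi]

theorem exists_isPlay_nonneg (hn : 3 ≤ n) (hκ : 1 < κ) (hκn : (n - 2) * κ < n - 1)
    {v : ZMod n → ℝ} {g : ℤ → ℤ} (h : Encodes n κ v g) :
    ∃ l, IsPlay n 0 v l ∧ ∀ j, 0 ≤ playResult n v l j := by
  by_cases hv : ∀ j, 0 ≤ v j
  · exact ⟨[], trivial, hv⟩
  push Not at hv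
  obtain ⟨i, hi⟩ := hv
  have := h.energy_fire_lt hn hκ hκn hi
  have := energy_nonneg (n := n) (g ∘ affineSwap n i)
  obtain ⟨l, hl, hnonneg⟩ := (h.fire hn i).exists_isPlay_nonneg hn hκ hκn
  exact ⟨i :: l, ⟨hi, hl⟩, hnonneg⟩
termination_by (energy n g).toNat
decreasing_by omega

theorem eq_of_nonneg (hn : 3 ≤ n) (hκ : 1 < κ) (hκn : (n - 2) * κ < n - 1)
    (h : Encodes n κ v g) (hd : 2 * displacement n g = -(n * (n - 1) * (n - 2)))
    (hv : ∀ j, 0 ≤ v j) :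
    v = fun x => if x = iota0 n then κ - (κ - 1) * (n - 1) else κ - 1 := by
  have hg := Int.eq_add_of_lt_add_one_of_add_period (by omega)
    (fun k => h.apply_lt_apply_add_one (by omega) hκ hκn (hv k)) h.add_period
  have hg0 : 2 * g 0 = -((n - 1) * (n - 2)) := by
    have hconst : displacement n g = n * g 0 := by
      rw [displacement, sum_congr rfl fun (k : ℕ) _ => show g k - k = g 0 by rw [hg]; ring]
      simp
    apply mul_left_cancel₀ (show (n : ℤ) ≠ 0 by omega)
    linear_combination hd - 2 * hconst
  funext x
  obtain ⟨k, rfl⟩ := ZMod.intCast_surjective x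
  have hiota : (n : ℤ) ∣ k + g 0 + 1 ↔ (k : ZMod n) = iota0 n := by
    rw [← ZMod.intCast_zmod_eq_zero_iff_dvd, ← intCast_neg_add_one_eq_iota0 hg0]
    push_cast
    constructor <;> intro h <;> linear_combination h
  rw [h.apply_eq, hg, hg (k + 1), add_right_comm, level_sub_level_add_one (by omega)]
  simp only [hiota]
  split_ifs <;> ring

end Encodes

end NumbersGame

theorem numbers_game_from_ukappa_general (n : ℕ) (hn : 3 ≤ n)
    (κ : ℝ) (hκ1 : 1 < κ) (hκ2 : κ < 1 + 1 / ((n : ℝ) - 2)) :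
    (∃ p : List (ZMod n), IsPlay n 0 (ukappa n κ) p ∧
      ∀ j, 0 ≤ playResult n (ukappa n κ) p j) ∧
    (∀ p : List (ZMod n), IsPlay n 0 (ukappa n κ) p →
      (∀ j, 0 ≤ playResult n (ukappa n κ) p j) →
      playResult n (ukappa n κ) p =
        fun x => if x = iota0 n then κ - (κ - 1) * ((n : ℝ) - 1) else κ - 1) := by
  have hκn : ((n : ℝ) - 2) * κ < n - 1 := by
    have h2 : (0 : ℝ) < n - 2 := by
      have : (3 : ℝ) ≤ n := by exact_mod_cast hn
      linarith
    have := (lt_div_iff₀ h2).1 (show κ - 1 < 1 / ((n : ℝ) - 2) by linarith)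
    nlinarith
  have h₀ := NumbersGame.encodes_ukappa (n := n) (by omega) κ
  refine ⟨h₀.exists_isPlay_nonneg hn hκ1 hκn, fun p _ hp => ?_⟩
  obtain ⟨g, hg, hd⟩ := h₀.exists_playResult hn p
  exact hg.eq_of_nonneg hn hκ1 hκn (hd ▸ NumbersGame.two_mul_displacement_initPerm (by omega)) hp

/-- For `1 < κ < 1 + 1/(n-2)`, some legal play from `u_κ` ends at a nonnegative
configuration, and every legal play from `u_κ` ending at a nonnegative configuration ends
at `(κ-1)·ρ^(ι0) + κ·e_{ι0}`. -/
theorem numbers_game_from_ukappa (n : ℕ) [NeZero n] (hn : 3 ≤ n)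
    (κ : ℝ) (hκ1 : 1 < κ) (hκ2 : κ < 1 + 1 / ((n : ℝ) - 2)) :
    (∃ p : List (ZMod n), IsPlay n 0 (ukappa n κ) p ∧
      ∀ j, 0 ≤ playResult n (ukappa n κ) p j) ∧
    (∀ p : List (ZMod n), IsPlay n 0 (ukappa n κ) p →
      (∀ j, 0 ≤ playResult n (ukappa n κ) p j) →
      playResult n (ukappa n κ) p =
        fun x => if x = iota0 n then κ - (κ - 1) * ((n : ℝ) - 1) else κ - 1) :=
  numbers_game_from_ukappa_general n hn κ hκ1 hκ2
end

section
/- Let n ≥ 3. The set of integral configurations u such that there is a (<-1)-play from ρ^(0) to u (the empty play being allowed, so ρ^(0) itself belongs to the set) has cardinality (n-1)!, i.e., it has |S_n|/n elements, one for each right coset of the rotation subgroup in the finite Weyl group of type A_{n-1}. -/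
set_option linter.unusedSectionVars false
set_option linter.unusedVariables false
set_option linter.unusedTactic false
set_option maxHeartbeats 1600000

namespace AffChip


variable (n : ℕ)

def Vset : Set (ℕ → ℤ) :=
  {Q | (∀ a, a + 1 < n → 1 ≤ Q a - Q (a+1) ∧ Q a - Q (a+1) ≤ (n : ℤ) - 1) ∧
       (∑ a ∈ Finset.range n, Q a) = (n*(n+1)/2 : ℕ) ∧
       (∀ a, a < n → ∀ b, b < n → (Q a : ZMod n) = (Q b : ZMod n) → a = b) ∧
       (∀ a, n ≤ a → Q a = 0)}

noncomputable def mu (Q : ℕ → ℤ) (i : ZMod n) : ℝ :=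
  ∑ a ∈ Finset.range n, if ((Q a : ZMod n) = i) then (a : ℝ) else 0

noncomputable def toConfig (Q : ℕ → ℤ) : ZMod n → ℝ :=
  fun i => mu n Q i - mu n Q (i + 1)

def Qstart : ℕ → ℤ := fun a => if a < n then (n : ℤ) - a else 0

variable {n}

section basic
variable [NeZero n]

lemma natCast_inj_of_lt {a b : ℕ} (ha : a < n) (hb : b < n)
    (h : ((a : ℕ) : ZMod n) = b) : a = b := by
  have := congrArg ZMod.val h
  rwa [ZMod.val_cast_of_lt ha, ZMod.val_cast_of_lt hb] at this

lemma int_eq_of_cast_eq (hn : 1 ≤ n) {d e : ℤ} (hd1 : 1 ≤ d) (hd2 : d ≤ (n:ℤ) - 1)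
    (he1 : 1 ≤ e) (he2 : e ≤ (n:ℤ) - 1) (h : ((d : ℤ) : ZMod n) = e) : d = e := by
  have hdvd : (n : ℤ) ∣ (d - e) := by
    rwa [← ZMod.intCast_zmod_eq_zero_iff_dvd, Int.cast_sub, sub_eq_zero]
  obtain ⟨c, hc⟩ := hdvd
  have hn' : (0:ℤ) < n := by exact_mod_cast Nat.pos_of_ne_zero (NeZero.ne n)
  have hc0 : c = 0 := by nlinarith
  rw [hc0, mul_zero] at hc
  omega

lemma resid_surj {Q : ℕ → ℤ} (hQ : Q ∈ Vset n) (i : ZMod n) :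
    ∃ a, a < n ∧ (Q a : ZMod n) = i := by
  obtain ⟨-, -, hdist, -⟩ := hQ
  have hinj : Function.Injective (fun a : Fin n => ((Q a : ℤ) : ZMod n)) := by
    intro a b h
    exact Fin.ext (hdist a a.isLt b b.isLt h)
  have hsurj : Function.Surjective (fun a : Fin n => ((Q a : ℤ) : ZMod n)) := by
    have h1 : Fintype.card (Fin n) = Fintype.card (ZMod n) := by
      simp [ZMod.card]
    exact (Fintype.bijective_iff_injective_and_card _).2 ⟨hinj, h1⟩ |>.2
  obtain ⟨a, ha⟩ := hsurj i
  exact ⟨a, a.isLt, ha⟩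

lemma mu_eq {Q : ℕ → ℤ} (hQ : Q ∈ Vset n) {a : ℕ} (ha : a < n) {i : ZMod n}
    (h : (Q a : ZMod n) = i) : mu n Q i = a := by
  obtain ⟨-, -, hdist, -⟩ := hQ
  rw [mu, Finset.sum_eq_single a]
  · rw [if_pos h]
  · intro b hb hba
    rw [if_neg]
    intro hbi
    exact hba (hdist b (Finset.mem_range.1 hb) a ha (hbi.trans h.symm))
  · intro hb
    exact absurd (Finset.mem_range.2 ha) hb

def moveQ (Q : ℕ → ℤ) (x y : ℕ) : ℕ → ℤ :=
  fun t => if t = x then Q x + 1 else if t = y then Q y - 1 else Q t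

lemma gap_resid {Q : ℕ → ℤ} {c : ℕ} :
    (Q (c+1) : ZMod n) = (Q c : ZMod n) - ((Q c - Q (c+1) : ℤ) : ZMod n) := by
  push_cast
  ring

lemma move_mem {Q : ℕ → ℤ} (hQ : Q ∈ Vset n) {x y : ℕ} (hx : x < n) (hy : y < n)
    (h1 : x ≠ y) (h2 : x ≠ y + 1) (h3 : y ≠ x + 1)
    (hres : (Q y : ZMod n) = (Q x : ZMod n) + 1) :
    moveQ Q x y ∈ Vset n := by
  obtain ⟨hgap, hsum, hdist, hzero⟩ := hQ
  refine ⟨?_, ?_, ?_, ?_⟩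
  · -- gaps
    intro c hc
    have hb := hgap c hc
    have hcast := gap_resid (n := n) (Q := Q) (c := c)
    have low : (Q (c+1) : ZMod n) ≠ (Q c : ZMod n) - 1 → 2 ≤ Q c - Q (c+1) := by
      intro h
      rcases eq_or_lt_of_le hb.1 with hd | hd
      · exact absurd (by rw [hcast, ← hd]; push_cast; ring) h
      · omega
    have high : (Q (c+1) : ZMod n) ≠ (Q c : ZMod n) + 1 → Q c - Q (c+1) ≤ (n:ℤ) - 2 := by
      intro h
      rcases eq_or_lt_of_le hb.2 with hd | hd
      · refine absurd ?_ h
        rw [hcast, hd]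
        push_cast
        rw [ZMod.natCast_self]
        ring
      · omega
    by_cases hcx : c = x
    · have e1 : c + 1 ≠ x := by omega
      have e2 : c + 1 ≠ y := by omega
      simp only [moveQ, if_pos hcx, if_neg e1, if_neg e2, ← hcx]
      have : Q c - Q (c+1) ≤ (n:ℤ) - 2 := by
        apply high
        intro heq
        rw [hcx] at heq
        exact h3 (hdist (x+1) (by omega) y hy (by rw [heq, hres])).symm
      omega
    · by_cases hc1x : c + 1 = x
      · have e1 : c ≠ y := by omega
        have e2 : c + 1 ≠ y := by omega
        simp only [moveQ, if_neg hcx, if_neg e1, hc1x, if_pos rfl]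
        have : 2 ≤ Q c - Q (c+1) := by
          apply low
          intro heq
          rw [hc1x] at heq
          have : Q c = (Q y : ZMod n) := by rw [hres, heq]; ring
          exact e1 (hdist c (by omega) y hy this)
        rw [← hc1x]
        omega
      · by_cases hcy : c = y
        · have e2 : c + 1 ≠ y := by omega
          simp only [moveQ, if_neg hcx, if_pos hcy, if_neg hc1x, if_neg e2, ← hcy]
          have : 2 ≤ Q c - Q (c+1) := by
            apply low
            intro heq
            rw [hcy] at heq
            have : (Q (y+1) : ZMod n) = Q x := by rw [heq, hres]; ring
            exact hc1x (by rw [hcy]; exact (hdist (y+1) (by omega) x hx this))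
          omega
        · by_cases hc1y : c + 1 = y
          · have e1 : c ≠ x := hcx
            simp only [moveQ, if_neg hcx, if_neg hcy, hc1y, if_neg (by omega : y ≠ x),
              if_pos rfl]
            have : Q c - Q (c+1) ≤ (n:ℤ) - 2 := by
              apply high
              intro heq
              rw [hc1y] at heq
              have : (Q c : ZMod n) = Q x := by
                have := hres.symm.trans heq
                linear_combination -this
              exact (by omega : c ≠ x) (hdist c (by omega) x hx this)
            rw [← hc1y]
            omega
          · simp only [moveQ, if_neg hcx, if_neg hcy, if_neg hc1x, if_neg hc1y]
            omega
  · -- sum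
    have hfun : ∀ t, moveQ Q x y t
        = Q t + ((if t = x then (1:ℤ) else 0) + (if t = y then (-1:ℤ) else 0)) := by
      intro t
      by_cases htx : t = x
      · have hty : t ≠ y := by omega
        simp only [moveQ, if_pos htx, if_neg hty]
        rw [htx]
        ring
      · by_cases hty : t = y
        · simp only [moveQ, if_neg htx, if_pos hty]
          rw [hty]
          ring
        · simp only [moveQ, if_neg htx, if_neg hty]
          ring
    calc ∑ a ∈ Finset.range n, moveQ Q x y a
        = (∑ a ∈ Finset.range n, Q a)
          + ((∑ a ∈ Finset.range n, if a = x then (1:ℤ) else 0)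
            + (∑ a ∈ Finset.range n, if a = y then (-1:ℤ) else 0)) := by
          rw [← Finset.sum_add_distrib, ← Finset.sum_add_distrib]
          exact Finset.sum_congr rfl fun t _ => hfun t
      _ = (n*(n+1)/2 : ℕ) := by
          rw [Finset.sum_ite_eq' (Finset.range n) x (fun _ => (1:ℤ)),
            Finset.sum_ite_eq' (Finset.range n) y (fun _ => (-1:ℤ)),
            if_pos (Finset.mem_range.2 hx), if_pos (Finset.mem_range.2 hy), hsum]
          ring
  · -- residues distinct
    have hsw : ∀ t, (moveQ Q x y t : ZMod n)
        = (Q (if t = x then y else if t = y then x else t) : ZMod n) := by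
      intro t
      by_cases htx : t = x
      · have hty : t ≠ y := by omega
        simp only [moveQ, if_pos htx, if_neg hty]
        push_cast
        rw [hres]
      · by_cases hty : t = y
        · simp only [moveQ, if_neg htx, if_pos hty]
          push_cast
          rw [hres]
          ring
        · simp only [moveQ, if_neg htx, if_neg hty]
    intro a ha b hb heq
    rw [hsw, hsw] at heq
    have hlt : ∀ t, t < n → (if t = x then y else if t = y then x else t) < n := by
      intro t ht
      split_ifs <;> omega
    have := hdist _ (hlt a ha) _ (hlt b hb) heq
    split_ifs at this <;> omega
  · intro t ht
    have htx : t ≠ x := by omega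
    have hty : t ≠ y := by omega
    simp only [moveQ, if_neg htx, if_neg hty]
    exact hzero t ht


end basic

section main
variable {n : ℕ} [NeZero n]



lemma fire_move (hn : 3 ≤ n) {Q : ℕ → ℤ} (hQ : Q ∈ Vset n) {a b : ℕ} (ha : a < n) (hb : b < n)
    (hab : a + 2 ≤ b) (hres : (Q b : ZMod n) = (Q a : ZMod n) + 1) :
    toConfig n (moveQ Q a b) = fire n ((Q a : ℤ) : ZMod n) (toConfig n Q) ∧
    toConfig n Q ((Q a : ℤ) : ZMod n) = (a : ℝ) - (b : ℝ) := by
  haveI : Fact (1 < n) := ⟨by omega⟩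
  have hone : (1 : ZMod n) ≠ 0 := one_ne_zero
  have htwo : (2 : ZMod n) ≠ 0 := by
    have hcast : ((2:ℕ) : ZMod n) = 2 := by push_cast; ring
    rw [← hcast, Ne, ZMod.natCast_eq_zero_iff]
    intro h
    have := Nat.le_of_dvd (by norm_num) h
    omega
  set i : ZMod n := ((Q a : ℤ) : ZMod n) with hi
  have e1 : i + 1 ≠ i := fun h => hone (by linear_combination h)
  have e2 : i - 1 ≠ i := fun h => hone (by linear_combination -h)
  have e3 : i + 2 ≠ i := fun h => htwo (by linear_combination h)
  have e4 : i - 1 ≠ i + 1 := fun h => htwo (by linear_combination -h)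
  have e5 : i + 2 ≠ i + 1 := fun h => hone (by linear_combination h)
  have hQ' : moveQ Q a b ∈ Vset n := move_mem hQ ha hb (by omega) (by omega) (by omega) hres
  have hab' : a ≠ b := by omega
  have hmua : mu n Q i = a := mu_eq hQ ha rfl
  have hmub : mu n Q (i+1) = b := mu_eq hQ hb (by rw [hres])
  have hra' : (moveQ Q a b a : ZMod n) = i + 1 := by
    simp only [moveQ, if_pos rfl]
    push_cast
    rfl
  have hrb' : (moveQ Q a b b : ZMod n) = i := by
    simp only [moveQ, if_neg (by omega : b ≠ a), if_pos rfl]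
    push_cast
    rw [hres]
    ring
  have hmu'i : mu n (moveQ Q a b) i = b := mu_eq hQ' hb hrb'
  have hmu'i1 : mu n (moveQ Q a b) (i+1) = a := mu_eq hQ' ha hra'
  have hother : ∀ j : ZMod n, j ≠ i → j ≠ i + 1 → mu n (moveQ Q a b) j = mu n Q j := by
    intro j hj1 hj2
    obtain ⟨c, hc, hcres⟩ := resid_surj hQ j
    have hca : c ≠ a := fun h => hj1 (by rw [← hcres, h])
    have hcb : c ≠ b := fun h => hj2 (by rw [← hcres, h, hres])
    have hres' : (moveQ Q a b c : ZMod n) = j := by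
      simp only [moveQ, if_neg hca, if_neg hcb]
      exact hcres
    rw [mu_eq hQ' hc hres', mu_eq hQ hc hcres]
  have hamp : toConfig n Q i = (a : ℝ) - (b : ℝ) := by
    simp only [toConfig, hmua, hmub]
  refine ⟨?_, hamp⟩
  funext j
  by_cases hj1 : j = i
  · rw [hj1]
    have hA : A n i i = 2 := if_pos rfl
    simp only [toConfig, fire, hA, hmu'i, hmu'i1, hmua, hmub]
    push_cast
    ring
  · by_cases hj2 : j = i + 1
    · rw [hj2]
      have hA : A n i (i+1) = -1 := by
        rw [A, if_neg (fun h => e1 h.symm), if_pos (Or.inl rfl)]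
      have h6 : i + 1 + 1 ≠ i := fun h => e3 (by linear_combination h)
      have h7 : i + 1 + 1 ≠ i + 1 := fun h => e1 (by linear_combination h)
      simp only [toConfig, fire, hA, hmu'i1, hmua, hmub, hother (i+1+1) h6 h7]
      push_cast
      ring
    · by_cases hj3 : j = i - 1
      · rw [hj3]
        have hA : A n i (i-1) = -1 := by
          rw [A, if_neg (fun h => e2 h.symm), if_pos (Or.inr rfl)]
        have hi1 : i - 1 + 1 = i := by ring
        simp only [toConfig, fire, hA, hi1, hmu'i, hmua, hmub,
          hother (i-1) e2 e4]
        push_cast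
        ring
      · have hA : A n i j = 0 := by
          rw [A, if_neg (fun h => hj1 h.symm), if_neg]
          rintro (h | h)
          · exact hj2 h
          · exact hj3 h
        have hj4 : j + 1 ≠ i := fun h => hj3 (by linear_combination h)
        have hj5 : j + 1 ≠ i + 1 := fun h => hj1 (by linear_combination h)
        simp only [toConfig, fire, hA, hother j hj1 hj2, hother (j+1) hj4 hj5]
        push_cast
        ring



lemma playResult_append (v : ZMod n → ℝ) (p q : List (ZMod n)) :
    playResult n v (p ++ q) = playResult n (playResult n v p) q := by
  induction p generalizing v with
  | nil => rfl
  | cons j l ih =>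
    simp only [List.cons_append, playResult]
    exact ih _

lemma isPlay_append {θ : ℝ} (v : ZMod n → ℝ) (p : List (ZMod n)) (i : ZMod n)
    (h : IsPlay n θ v p) (hi : playResult n v p i < θ) : IsPlay n θ v (p ++ [i]) := by
  induction p generalizing v with
  | nil => exact ⟨hi, trivial⟩
  | cons j l ih => exact ⟨h.1, ih _ h.2 hi⟩

/-- reachability of a configuration -/
def Reach (n : ℕ) (u : ZMod n → ℝ) : Prop :=
  ∃ p : List (ZMod n), IsPlay n (-1) (rho n 0) p ∧ playResult n (rho n 0) p = u

lemma tri_mul_two : ((n*(n+1)/2 : ℕ) : ℤ) * 2 = (n:ℤ)*((n:ℤ)+1) := by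
  have h : 2 ∣ n * (n+1) := (Nat.even_mul_succ_self n).two_dvd
  have := Nat.div_mul_cancel h
  exact_mod_cast congrArg (Nat.cast : ℕ → ℤ) this

lemma Qstart_mem (hn : 3 ≤ n) : Qstart n ∈ Vset n := by
  refine ⟨?_, ?_, ?_, ?_⟩
  · intro a ha
    have h1 : a < n := by omega
    simp only [Qstart, if_pos h1, if_pos ha]
    push_cast
    omega
  · have hall : ∀ a ∈ Finset.range n, Qstart n a = (n:ℤ) - a := by
      intro a ha
      simp only [Qstart, if_pos (Finset.mem_range.1 ha)]
    rw [Finset.sum_congr rfl hall, Finset.sum_sub_distrib, Finset.sum_const,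
      Finset.card_range]
    have h2 : (∑ a ∈ Finset.range n, (a:ℤ)) * 2 = (n:ℤ) * ((n:ℤ)-1) := by
      have h := Finset.sum_range_id_mul_two n
      have hcast := congrArg (Nat.cast : ℕ → ℤ) h
      push_cast [Nat.cast_sub (show 1 ≤ n from by omega)] at hcast
      linarith [hcast]
    have h3 := tri_mul_two (n := n)
    rw [nsmul_eq_mul]
    linarith [h2, h3]
  · intro a ha b hb heq
    simp only [Qstart, if_pos ha, if_pos hb] at heq
    push_cast at heq
    have hself : ((n:ℤ) : ZMod n) = 0 := by
      simp
    have : ((a:ℕ) : ZMod n) = ((b:ℕ) : ZMod n) := by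
      have : (0:ZMod n) - (a:ℕ) = (0:ZMod n) - (b:ℕ) := by
        rw [← hself]
        exact_mod_cast heq
      linear_combination -this
    exact natCast_inj_of_lt ha hb this
  · intro a ha
    simp [Qstart, Nat.not_lt.2 ha]

lemma val_natCast_lt {m : ℕ} (hm : m < n) : ((m : ZMod n)).val = m :=
  ZMod.val_cast_of_lt hm

lemma rho_eq_toConfig (hn : 3 ≤ n) : rho n 0 = toConfig n (Qstart n) := by
  have hQ := Qstart_mem (n := n) hn
  have hmu : ∀ j : ZMod n, mu n (Qstart n) j = ((n - j.val) % n : ℕ) := by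
    intro j
    have hjv : j.val < n := ZMod.val_lt j
    by_cases hj : j = 0
    · subst hj
      rw [ZMod.val_zero]
      have : (n - 0) % n = 0 := by simp [Nat.mod_self]
      rw [this]
      refine mu_eq hQ (Nat.pos_of_ne_zero (NeZero.ne n)) ?_
      simp [Qstart, Nat.pos_of_ne_zero (NeZero.ne n)]
    · have hjv1 : 1 ≤ j.val := by
        rcases Nat.eq_zero_or_pos j.val with h | h
        · exact absurd ((ZMod.val_eq_zero j).1 h) hj
        · exact h
      have hmod : (n - j.val) % n = n - j.val := Nat.mod_eq_of_lt (by omega)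
      rw [hmod]
      refine mu_eq hQ (by omega) ?_
      simp only [Qstart, if_pos (show n - j.val < n by omega)]
      push_cast [Nat.cast_sub (le_of_lt hjv)]
      rw [ZMod.natCast_self]
      have : ((j.val : ℕ) : ZMod n) = j := ZMod.natCast_rightInverse j
      rw [this]
      ring
  funext j
  by_cases hj : j = 0
  · subst hj
    rw [rho, if_pos rfl]
    show 1 - (n:ℝ) = mu n (Qstart n) 0 - mu n (Qstart n) (0+1)
    rw [zero_add, hmu 0, hmu 1]
    haveI : Fact (1 < n) := ⟨by omega⟩
    rw [ZMod.val_zero, ZMod.val_one]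
    have h1 : (n - 0) % n = 0 := by simp [Nat.mod_self]
    have h2 : (n - 1) % n = n - 1 := Nat.mod_eq_of_lt (by omega)
    rw [h1, h2]
    push_cast [Nat.cast_sub (show 1 ≤ n by omega)]
    ring
  · rw [rho, if_neg hj, toConfig, hmu j, hmu (j+1)]
    have hjv : j.val < n := ZMod.val_lt j
    have hjv1 : 1 ≤ j.val := by
      rcases Nat.eq_zero_or_pos j.val with h | h
      · exact absurd ((ZMod.val_eq_zero j).1 h) hj
      · exact h
    by_cases hj1 : j + 1 = 0
    · have hval : j.val = n - 1 := by
        have : j = ((n-1 : ℕ) : ZMod n) := by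
          have hc : ((n:ℕ) : ZMod n) = 0 := ZMod.natCast_self n
          have : ((n - 1 : ℕ) : ZMod n) = 0 - 1 := by
            push_cast [Nat.cast_sub (show 1 ≤ n by omega)]
            rw [ZMod.natCast_self]
          rw [this]
          linear_combination hj1
        rw [this, val_natCast_lt (show n - 1 < n by omega)]
      rw [hj1, ZMod.val_zero, hval]
      have h1 : (n - (n-1)) % n = 1 := by
        have : n - (n-1) = 1 := by omega
        rw [this]
        exact Nat.mod_eq_of_lt (by omega)
      have h2 : (n - 0) % n = 0 := by simp [Nat.mod_self]
      rw [h1, h2]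
      norm_num
    · have hvs : (j + 1).val = j.val + 1 := by
        have hlt : j.val + 1 < n := by
          rcases Nat.lt_or_ge (j.val + 1) n with h | h
          · exact h
          · exfalso
            have hval : j.val = n - 1 := by omega
            apply hj1
            have : j = ((n-1 : ℕ) : ZMod n) := by
              conv_lhs => rw [← ZMod.natCast_rightInverse j]
              rw [hval]
            rw [this]
            push_cast [Nat.cast_sub (show 1 ≤ n by omega)]
            rw [ZMod.natCast_self]
            ring
        have : j + 1 = ((j.val + 1 : ℕ) : ZMod n) := by
          push_cast
          rw [ZMod.natCast_rightInverse j]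
        rw [this, val_natCast_lt hlt]
      rw [hvs]
      have h1 : (n - j.val) % n = n - j.val := Nat.mod_eq_of_lt (by omega)
      have h2 : (n - (j.val+1)) % n = n - (j.val + 1) := Nat.mod_eq_of_lt (by omega)
      rw [h1, h2]
      have hle : j.val + 1 ≤ n := by omega
      push_cast [Nat.cast_sub (le_of_lt hjv), Nat.cast_sub hle]
      ring

/-- Forward propagation: plays starting from a `V`-configuration stay in the image of `V`. -/
lemma plays_stay (hn : 3 ≤ n) :
    ∀ (p : List (ZMod n)) (Q : ℕ → ℤ), Q ∈ Vset n → IsPlay n (-1) (toConfig n Q) p →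
    ∃ Q', Q' ∈ Vset n ∧ playResult n (toConfig n Q) p = toConfig n Q' := by
  intro p
  induction p with
  | nil => exact fun Q hQ _ => ⟨Q, hQ, rfl⟩
  | cons i l ih =>
    intro Q hQ hplay
    obtain ⟨hlt, hplay'⟩ := hplay
    obtain ⟨a, ha, hra⟩ := resid_surj hQ i
    obtain ⟨b, hb, hrb⟩ := resid_surj hQ (i+1)
    have hamp : toConfig n Q i = (a:ℝ) - b := by
      rw [toConfig, mu_eq hQ ha hra, mu_eq hQ hb hrb]
    have hab : a + 2 ≤ b := by
      rw [hamp] at hlt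
      have : (a:ℝ) + 2 ≤ (b:ℝ) ∨ ¬ ((a:ℝ) - b < -1) := by
        by_cases hc : a + 2 ≤ b
        · left; exact_mod_cast hc
        · right
          push_neg
          have : b ≤ a + 1 := by omega
          have : (b:ℝ) ≤ (a:ℝ) + 1 := by exact_mod_cast this
          linarith
      rcases this with h | h
      · exact_mod_cast h
      · exact absurd hlt h
    have hres : (Q b : ZMod n) = (Q a : ZMod n) + 1 := by rw [hra, hrb]
    obtain ⟨hfire, -⟩ := fire_move hn hQ ha hb hab hres
    have hQ' : moveQ Q a b ∈ Vset n :=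
      move_mem hQ ha hb (by omega) (by omega) (by omega) hres
    rw [hra] at hfire
    obtain ⟨Q'', hQ'', hres''⟩ := ih (moveQ Q a b) hQ' (by rwa [← hfire] at hplay')
    refine ⟨Q'', hQ'', ?_⟩
    simp only [playResult]
    rw [← hfire, hres'']



/-- potential -/
def Phi (n : ℕ) (Q : ℕ → ℤ) : ℤ := ∑ a ∈ Finset.range n, (a:ℤ) * Q a

def Bnd (n : ℕ) : ℤ :=
  (∑ a ∈ Finset.range n, (a:ℤ)) * (((n*(n+1)/2 : ℕ) : ℤ) + (n:ℤ)*((n:ℤ)-1)^2)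

lemma mono_of_mem {Q : ℕ → ℤ} (hQ : Q ∈ Vset n) :
    ∀ b, b < n → Q b ≤ Q 0 ∧ Q 0 - Q b ≤ (b:ℤ) * ((n:ℤ)-1) := by
  obtain ⟨hgap, -, -, -⟩ := hQ
  intro b
  induction b with
  | zero => intro _; simp
  | succ c ih =>
    intro hc
    have hstep := hgap c (by omega)
    obtain ⟨h1, h2⟩ := ih (by omega)
    constructor
    · omega
    · have : (c:ℤ) + 1 ≤ n := by exact_mod_cast Nat.le_of_lt hc
      push_cast
      nlinarith [hstep.2, h2]

lemma Q0_bound {Q : ℕ → ℤ} (hQ : Q ∈ Vset n) :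
    Q 0 ≤ ((n*(n+1)/2 : ℕ) : ℤ) + (n:ℤ)*((n:ℤ)-1)^2 := by
  have hsum := hQ.2.1
  have hmono := mono_of_mem hQ
  have hlow : ∀ b ∈ Finset.range n, Q 0 - ((n:ℤ)-1)^2 * 1 ≤ Q b := by
    intro b hb
    have hb' := Finset.mem_range.1 hb
    have := (hmono b hb').2
    have hbn : (b:ℤ) ≤ (n:ℤ) - 1 := by
      have : b ≤ n - 1 := by omega
      have h3 : ((b:ℕ):ℤ) ≤ ((n-1:ℕ):ℤ) := by exact_mod_cast this
      push_cast [Nat.cast_sub (show 1 ≤ n from by omega)] at h3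
      omega
    nlinarith
  have hsum2 : ∑ b ∈ Finset.range n, (Q 0 - ((n:ℤ)-1)^2 * 1) ≤ ∑ b ∈ Finset.range n, Q b :=
    Finset.sum_le_sum hlow
  rw [Finset.sum_const, Finset.card_range, nsmul_eq_mul, hsum] at hsum2
  have hn1 : (1:ℤ) ≤ (n:ℤ) := by exact_mod_cast Nat.pos_of_ne_zero (NeZero.ne n)
  rcases le_or_gt (Q 0) 0 with h | h
  · nlinarith [sq_nonneg ((n:ℤ)-1), tri_mul_two (n := n)]
  · nlinarith [sq_nonneg ((n:ℤ)-1)]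

lemma Phi_bound {Q : ℕ → ℤ} (hQ : Q ∈ Vset n) : Phi n Q ≤ Bnd n := by
  have h0 := Q0_bound hQ
  have hmono := mono_of_mem hQ
  have h1 : ∀ a ∈ Finset.range n, (a:ℤ) * Q a ≤ (a:ℤ) * Q 0 := by
    intro a ha
    exact mul_le_mul_of_nonneg_left ((hmono a (Finset.mem_range.1 ha)).1) (by positivity)
  have h2 : Phi n Q ≤ (∑ a ∈ Finset.range n, (a:ℤ)) * Q 0 := by
    rw [Phi]
    calc ∑ a ∈ Finset.range n, (a:ℤ) * Q a ≤ ∑ a ∈ Finset.range n, (a:ℤ) * Q 0 :=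
          Finset.sum_le_sum h1
      _ = (∑ a ∈ Finset.range n, (a:ℤ)) * Q 0 := by rw [Finset.sum_mul]
  have hM : (0:ℤ) ≤ ∑ a ∈ Finset.range n, (a:ℤ) := Finset.sum_nonneg fun a _ => by positivity
  calc Phi n Q ≤ (∑ a ∈ Finset.range n, (a:ℤ)) * Q 0 := h2
    _ ≤ Bnd n := by
        rw [Bnd]
        exact mul_le_mul_of_nonneg_left h0 hM

lemma Phi_move {Q : ℕ → ℤ} {x y : ℕ} (hx : x < n) (hy : y < n) (hxy : x ≠ y) :
    Phi n (moveQ Q x y) = Phi n Q + (x:ℤ) - (y:ℤ) := by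
  have hfun : ∀ t : ℕ, (t:ℤ) * moveQ Q x y t
      = (t:ℤ) * Q t + ((if t = x then (x:ℤ) else 0) + (if t = y then -(y:ℤ) else 0)) := by
    intro t
    by_cases htx : t = x
    · have hty : t ≠ y := by omega
      simp only [moveQ, if_pos htx, if_neg hty]
      rw [htx]
      ring
    · by_cases hty : t = y
      · simp only [moveQ, if_neg htx, if_pos hty]
        rw [hty]
        ring
      · simp only [moveQ, if_neg htx, if_neg hty]
        ring
  rw [Phi, Phi, Finset.sum_congr rfl (fun t _ => hfun t), Finset.sum_add_distrib,
    Finset.sum_add_distrib, Finset.sum_ite_eq' (Finset.range n) x (fun _ => (x:ℤ)),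
    Finset.sum_ite_eq' (Finset.range n) y (fun _ => -(y:ℤ)),
    if_pos (Finset.mem_range.2 hx), if_pos (Finset.mem_range.2 hy)]
  ring

/-- If `Q ∈ V` differs from `Qstart`, there is a reverse-move pair. -/
lemma exists_pair (hn : 3 ≤ n) {Q : ℕ → ℤ} (hQ : Q ∈ Vset n) (hne : Q ≠ Qstart n) :
    ∃ u v, u < n ∧ v < n ∧ u + 2 ≤ v ∧ (Q v : ZMod n) = (Q u : ZMod n) - 1 := by
  by_contra hcon
  push_neg at hcon
  obtain ⟨hgap, hsum, hdist, hzero⟩ := hQ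
  -- the chain argument: the index with residue (Q 0) - j is j
  have hchain : ∀ j, j < n → ∀ a, a < n → (Q a : ZMod n) = (Q 0 : ZMod n) - j → a = j := by
    intro j
    induction j using Nat.strong_induction_on with
    | _ j IH =>
      intro hj a ha hres
      match j, hj with
      | 0, hj =>
        have : (Q a : ZMod n) = (Q 0 : ZMod n) := by rw [hres]; push_cast; ring
        exact hdist a ha 0 (by omega) this
      | (m+1), hj =>
        obtain ⟨c, hc, hcres⟩ := resid_surj ⟨hgap, hsum, hdist, hzero⟩
          ((Q 0 : ZMod n) - ((m:ℕ) : ZMod n))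
        have hcm : c = m := IH m (by omega) (by omega) c hc hcres
        subst hcm
        have hstep : (Q a : ZMod n) = (Q c : ZMod n) - 1 := by
          rw [hcres, hres]
          push_cast
          ring
        have hle : a ≤ c + 1 := by
          by_contra hgt
          exact hcon c a hc ha (by omega) hstep
        rcases Nat.lt_or_ge a (c+1) with hlt | hge
        · exfalso
          obtain ⟨d, hd, hdres⟩ := resid_surj ⟨hgap, hsum, hdist, hzero⟩
            ((Q 0 : ZMod n) - ((a:ℕ) : ZMod n))
          have hda : d = a := IH a (by omega) ha d hd hdres
          rw [hda] at hdres
          have hac : ((a:ℕ) : ZMod n) = (((c+1):ℕ) : ZMod n) := by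
            have h1 := hdres.symm.trans hres
            push_cast at h1 ⊢
            linear_combination -h1
          have := natCast_inj_of_lt ha (by omega) hac
          omega
        · omega
  -- hence Q c = Q 0 - c for all c < n
  have hval : ∀ c, c < n → Q c = Q 0 - c := by
    intro c
    induction c with
    | zero => intro _; simp
    | succ m ihm =>
      intro hc
      obtain ⟨d, hd, hdres⟩ := resid_surj ⟨hgap, hsum, hdist, hzero⟩
        ((Q 0 : ZMod n) - (((m+1):ℕ) : ZMod n))
      have := hchain (m+1) hc d hd hdres
      subst this
      have hm := ihm (by omega)
      -- gap between m and m+1 is ≡ 1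
      have hgapcast : ((Q m - Q (m+1) : ℤ) : ZMod n) = ((1:ℤ) : ZMod n) := by
        push_cast
        rw [hdres]
        have hmres : (Q m : ZMod n) = (Q 0 : ZMod n) - m := by
          obtain ⟨e, he, heres⟩ := resid_surj ⟨hgap, hsum, hdist, hzero⟩
            ((Q 0 : ZMod n) - ((m:ℕ) : ZMod n))
          have := hchain m (by omega) e he heres
          subst this
          exact heres
        rw [hmres]
        push_cast
        ring
      have hgm := hgap m hc
      have : Q m - Q (m+1) = 1 :=
        int_eq_of_cast_eq (by omega) hgm.1 hgm.2 (by omega) (by push_cast; omega) hgapcast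
      omega
  -- sum forces Q 0 = n
  have hQ0 : Q 0 = n := by
    have hall : ∀ c ∈ Finset.range n, Q c = Q 0 - c := fun c hc =>
      hval c (Finset.mem_range.1 hc)
    rw [Finset.sum_congr rfl hall, Finset.sum_sub_distrib, Finset.sum_const,
      Finset.card_range, nsmul_eq_mul] at hsum
    have h2 : (∑ a ∈ Finset.range n, (a:ℤ)) * 2 = (n:ℤ) * ((n:ℤ)-1) := by
      have h := Finset.sum_range_id_mul_two n
      have hcast := congrArg (Nat.cast : ℕ → ℤ) h
      push_cast [Nat.cast_sub (show 1 ≤ n from by omega)] at hcast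
      linarith [hcast]
    have h3 := tri_mul_two (n := n)
    have hnpos : (0:ℤ) < n := by exact_mod_cast Nat.pos_of_ne_zero (NeZero.ne n)
    nlinarith
  apply hne
  funext t
  by_cases ht : t < n
  · rw [hval t ht, hQ0, Qstart, if_pos ht]
  · rw [hzero t (by omega), Qstart, if_neg ht]



lemma reach_all (hn : 3 ≤ n) : ∀ (k : ℕ) (Q : ℕ → ℤ), Q ∈ Vset n →
    (Bnd n - Phi n Q).toNat = k → Reach n (toConfig n Q) := by
  intro k
  induction k using Nat.strong_induction_on with
  | _ k IH =>
    intro Q hQ hk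
    by_cases hQ0 : Q = Qstart n
    · subst hQ0
      exact ⟨[], trivial, by simp [playResult, rho_eq_toConfig hn]⟩
    · obtain ⟨u, v, hu, hv, huv, hres⟩ := exists_pair hn hQ hQ0
      set Q' := moveQ Q v u with hQ'def
      have hres' : (Q u : ZMod n) = (Q v : ZMod n) + 1 := by rw [hres]; ring
      have hQ'mem : Q' ∈ Vset n :=
        move_mem hQ hv hu (by omega) (by omega) (by omega) hres'
      have hQ'u : Q' u = Q u - 1 := by
        simp [hQ'def, moveQ, show u ≠ v by omega]
      have hQ'v : Q' v = Q v + 1 := by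
        simp [hQ'def, moveQ]
      have hresf : (Q' v : ZMod n) = (Q' u : ZMod n) + 1 := by
        rw [hQ'u, hQ'v]
        push_cast
        linear_combination hres
      have hforward : moveQ Q' u v = Q := by
        funext t
        by_cases htu : t = u
        · rw [htu, show moveQ Q' u v u = Q' u + 1 from by simp [moveQ, show u ≠ v by omega],
            hQ'u]
          ring
        · by_cases htv : t = v
          · rw [htv, show moveQ Q' u v v = Q' v - 1 from by
              simp [moveQ, show v ≠ u by omega], hQ'v]
            ring
          · rw [show moveQ Q' u v t = Q' t from by simp [moveQ, htu, htv]]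
            simp [hQ'def, moveQ, htu, htv]
      obtain ⟨hfire, hamp⟩ := fire_move hn hQ'mem hu hv huv hresf
      have hphi : Phi n Q' = Phi n Q + (v:ℤ) - u := Phi_move hv hu (by omega)
      have hlt : (Bnd n - Phi n Q').toNat < k := by
        have hb := Phi_bound hQ'mem
        rw [← hk]
        omega
      obtain ⟨p, hp, hpres⟩ := IH _ hlt Q' hQ'mem rfl
      refine ⟨p ++ [((Q' u : ℤ) : ZMod n)], ?_, ?_⟩
      · apply isPlay_append _ _ _ hp
        rw [hpres, hamp]
        have : (u:ℝ) + 2 ≤ v := by exact_mod_cast huv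
        linarith
      · rw [playResult_append, hpres]
        show fire n _ (toConfig n Q') = toConfig n Q
        rw [← hfire, hforward]

lemma reach_of_mem (hn : 3 ≤ n) {Q : ℕ → ℤ} (hQ : Q ∈ Vset n) :
    Reach n (toConfig n Q) :=
  reach_all hn _ Q hQ rfl



lemma sum_mu {Q : ℕ → ℤ} (hQ : Q ∈ Vset n) :
    ∑ i : ZMod n, mu n Q i = ∑ a ∈ Finset.range n, (a:ℝ) := by
  rw [show (∑ i : ZMod n, mu n Q i)
      = ∑ a ∈ Finset.range n, (∑ i : ZMod n, if ((Q a : ZMod n) = i) then (a:ℝ) else 0)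
    from Finset.sum_comm]
  refine Finset.sum_congr rfl fun a _ => ?_
  rw [Finset.sum_ite_eq Finset.univ ((Q a : ℤ) : ZMod n) (fun _ => (a:ℝ)),
    if_pos (Finset.mem_univ _)]

lemma mu_eq_of_toConfig {Q Q' : ℕ → ℤ} (hQ : Q ∈ Vset n) (hQ' : Q' ∈ Vset n)
    (h : toConfig n Q = toConfig n Q') : mu n Q = mu n Q' := by
  have hd : ∀ i : ZMod n, mu n Q (i+1) - mu n Q' (i+1) = mu n Q i - mu n Q' i := by
    intro i
    have := congrFun h i
    simp only [toConfig] at this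
    linarith
  have hconst : ∀ k : ℕ, mu n Q ((k : ZMod n)) - mu n Q' ((k : ZMod n))
      = mu n Q 0 - mu n Q' 0 := by
    intro k
    induction k with
    | zero => norm_num
    | succ m ih =>
      have h1 := hd ((m : ZMod n))
      push_cast
      rw [h1, ih]
  have hall : ∀ i : ZMod n, mu n Q i - mu n Q' i = mu n Q 0 - mu n Q' 0 := by
    intro i
    have : ((i.val : ℕ) : ZMod n) = i := ZMod.natCast_rightInverse i
    rw [← this]
    exact hconst i.val
  have hzero : mu n Q 0 - mu n Q' 0 = 0 := by
    have hsum : ∑ i : ZMod n, (mu n Q i - mu n Q' i) = 0 := by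
      rw [Finset.sum_sub_distrib, sum_mu hQ, sum_mu hQ']
      ring
    rw [Finset.sum_congr rfl (fun i _ => hall i), Finset.sum_const, Finset.card_univ,
      ZMod.card, nsmul_eq_mul] at hsum
    have hn0 : (n:ℝ) ≠ 0 := by
      exact_mod_cast NeZero.ne n
    exact (mul_eq_zero.1 hsum).resolve_left hn0
  funext i
  have := hall i
  rw [hzero] at this
  linarith

lemma resid_eq_of_mu {Q Q' : ℕ → ℤ} (hQ : Q ∈ Vset n) (hQ' : Q' ∈ Vset n)
    (h : mu n Q = mu n Q') : ∀ a, a < n → (Q a : ZMod n) = (Q' a : ZMod n) := by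
  intro a ha
  obtain ⟨b, hb, hbres⟩ := resid_surj hQ' ((Q a : ℤ) : ZMod n)
  have h1 : mu n Q' ((Q a : ℤ) : ZMod n) = b := mu_eq hQ' hb hbres
  have h2 : mu n Q ((Q a : ℤ) : ZMod n) = a := mu_eq hQ ha rfl
  rw [h, h1] at h2
  have : b = a := by exact_mod_cast h2
  rw [← hbres, this]

lemma eq_of_gap_eq {Q Q' : ℕ → ℤ} (hQ : Q ∈ Vset n) (hQ' : Q' ∈ Vset n)
    (hg : ∀ c, c + 1 < n → Q c - Q (c+1) = Q' c - Q' (c+1)) : Q = Q' := by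
  obtain ⟨hgap, hsum, hdist, hzero⟩ := hQ
  obtain ⟨hgap', hsum', hdist', hzero'⟩ := hQ'
  have hconst : ∀ c, c < n → Q c - Q' c = Q 0 - Q' 0 := by
    intro c
    induction c with
    | zero => intro _; rfl
    | succ m ih =>
      intro hc
      have := hg m hc
      have := ih (by omega)
      omega
  have hzero0 : Q 0 - Q' 0 = 0 := by
    have h1 : ∑ c ∈ Finset.range n, (Q c - Q' c) = 0 := by
      rw [Finset.sum_sub_distrib, hsum, hsum']
      ring
    rw [Finset.sum_congr rfl (fun c hc => hconst c (Finset.mem_range.1 hc)),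
      Finset.sum_const, Finset.card_range, nsmul_eq_mul] at h1
    have hn0 : ((n:ℤ)) ≠ 0 := by exact_mod_cast NeZero.ne n
    exact (mul_eq_zero.1 h1).resolve_left hn0
  funext c
  by_cases hc : c < n
  · have := hconst c hc
    omega
  · rw [hzero c (by omega), hzero' c (by omega)]

lemma gap_eq_of_resid {Q Q' : ℕ → ℤ} (hQ : Q ∈ Vset n) (hQ' : Q' ∈ Vset n)
    (h : ∀ c, c + 1 < n → (Q c : ZMod n) - (Q (c+1) : ZMod n)
        = (Q' c : ZMod n) - (Q' (c+1) : ZMod n)) :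
    ∀ c, c + 1 < n → Q c - Q (c+1) = Q' c - Q' (c+1) := by
  intro c hc
  have hb := hQ.1 c hc
  have hb' := hQ'.1 c hc
  refine int_eq_of_cast_eq (by omega) hb.1 hb.2 hb'.1 hb'.2 ?_
  push_cast
  exact h c hc

lemma toConfig_injOn : Set.InjOn (toConfig n) (Vset n) := by
  intro Q hQ Q' hQ' h
  have hmu := mu_eq_of_toConfig hQ hQ' h
  have hres := resid_eq_of_mu hQ hQ' hmu
  refine eq_of_gap_eq hQ hQ' (gap_eq_of_resid hQ hQ' ?_)
  intro c hc
  rw [hres c (by omega), hres (c+1) hc]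



def Emap (n : ℕ) (Q : ℕ → ℤ) : Fin (n-1) → ZMod n :=
  fun k => (Q 0 : ZMod n) - (Q (k.val + 1) : ZMod n)

def Wset (n : ℕ) : Set (Fin (n-1) → ZMod n) :=
  {f | Function.Injective f ∧ ∀ k, f k ≠ 0}

lemma Emap_gap {Q : ℕ → ℤ} (c : ℕ) (hc : c + 1 < n) :
    ((Q c : ZMod n)) - (Q (c+1) : ZMod n)
      = (if h : c = 0 then 0 else - Emap n Q ⟨c - 1, by omega⟩) + Emap n Q ⟨c, by omega⟩ := by
  by_cases h : c = 0
  · subst h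
    rw [dif_pos rfl]
    simp [Emap]
  · rw [dif_neg h]
    simp only [Emap]
    have : c - 1 + 1 = c := by omega
    rw [this]
    ring

lemma Emap_injOn (hn : 3 ≤ n) : Set.InjOn (Emap n) (Vset n) := by
  intro Q hQ Q' hQ' h
  refine eq_of_gap_eq hQ hQ' (gap_eq_of_resid hQ hQ' ?_)
  intro c hc
  rw [Emap_gap c hc, Emap_gap c hc, h]

lemma natCast_sum_range (F : ℕ → ZMod n)
    (hinj : ∀ a, a < n → ∀ b, b < n → F a = F b → a = b) :
    ∑ c ∈ Finset.range n, F c = ∑ x : ZMod n, x := by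
  have hinj' : ∀ x ∈ Finset.range n, ∀ y ∈ Finset.range n, F x = F y → x = y := by
    intro x hx y hy
    exact hinj x (Finset.mem_range.1 hx) y (Finset.mem_range.1 hy)
  have himg : (Finset.range n).image F = Finset.univ := by
    apply Finset.eq_univ_of_card
    rw [Finset.card_image_of_injOn hinj', Finset.card_range, ZMod.card]
  rw [← himg, Finset.sum_image hinj']

lemma sum_univ_zmod : ∑ x : ZMod n, x = ((n * (n-1) / 2 : ℕ) : ZMod n) := by
  have h := natCast_sum_range (n := n) (fun c => (c : ZMod n)) ?_
  · rw [← h, ← Nat.cast_sum]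
    congr 1
    have h2 := Finset.sum_range_id_mul_two n
    omega
  · intro a ha b hb hab
    exact natCast_inj_of_lt ha hb hab

lemma Emap_image (hn : 3 ≤ n) : Emap n '' (Vset n) = Wset n := by
  apply Set.Subset.antisymm
  · rintro f ⟨Q, hQ, rfl⟩
    constructor
    · intro k l hkl
      simp only [Emap] at hkl
      have : (Q (k.val+1) : ZMod n) = (Q (l.val+1) : ZMod n) := by
        linear_combination -hkl
      have hk := k.isLt
      have hl := l.isLt
      have := hQ.2.2.1 _ (by omega) _ (by omega) this
      exact Fin.ext (by omega)
    · intro k hk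
      simp only [Emap] at hk
      have : (Q 0 : ZMod n) = (Q (k.val+1) : ZMod n) := by
        linear_combination hk
      have hklt := k.isLt
      have := hQ.2.2.1 _ (by omega) _ (by omega) this
      omega
  · rintro f ⟨hfinj, hf0⟩
    -- reconstruction
    set T : ℕ → ZMod n := fun a => if h : a = 0 then 0 else
      if h2 : a - 1 < n - 1 then f ⟨a - 1, h2⟩ else 0 with hT
    have hT0 : T 0 = 0 := by simp [hT]
    have hTs : ∀ (k : ℕ) (hk : k < n - 1), T (k+1) = f ⟨k, hk⟩ := by
      intro k hk
      simp only [hT]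
      rw [dif_neg (by omega : ¬ k + 1 = 0)]
      simp only [Nat.add_sub_cancel]
      rw [dif_pos hk]
    have hTinj : ∀ a, a < n → ∀ b, b < n → T a = T b → a = b := by
      intro a ha b hb hab
      match a, b with
      | 0, 0 => rfl
      | 0, (m+1) =>
        rw [hT0, hTs m (by omega)] at hab
        exact absurd hab.symm (hf0 _)
      | (m+1), 0 =>
        rw [hT0, hTs m (by omega)] at hab
        exact absurd hab (hf0 _)
      | (m+1), (l+1) =>
        rw [hTs m (by omega), hTs l (by omega)] at hab
        have := hfinj hab
        have := Fin.val_eq_of_eq this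
        simp only at this
        omega
    set g : ℕ → ℕ := fun c => (T (c+1) - T c).val with hgdef
    set S : ℕ → ℤ := fun c => ∑ j ∈ Finset.range c, (g j : ℤ) with hSdef
    have hglow : ∀ c, c + 1 < n → 1 ≤ g c ∧ g c ≤ n - 1 := by
      intro c hc
      have hne : T (c+1) - T c ≠ 0 := by
        intro h0
        have : T (c+1) = T c := by
          have := sub_eq_zero.1 h0
          exact this
        have := hTinj (c+1) (by omega) c (by omega) this
        omega
      have h1 : g c < n := ZMod.val_lt _
      have h2 : g c ≠ 0 := fun h => hne ((ZMod.val_eq_zero _).1 h)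
      exact ⟨by omega, by omega⟩
    have hSres : ∀ c, c < n → ((S c : ℤ) : ZMod n) = T c := by
      intro c
      induction c with
      | zero => intro _; simp [hSdef, hT0]
      | succ m ih =>
        intro hc
        have hS1 : S (m+1) = S m + (g m : ℤ) := by
          simp [hSdef, Finset.sum_range_succ]
        rw [hS1]
        push_cast
        rw [ih (by omega)]
        simp only [hgdef]
        rw [ZMod.natCast_rightInverse (T (m+1) - T m)]
        ring
    set total : ℤ := ∑ c ∈ Finset.range n, S c with htot
    have hdvd : (n:ℤ) ∣ ((n*(n+1)/2 : ℕ) : ℤ) + total := by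
      rw [← ZMod.intCast_zmod_eq_zero_iff_dvd, Int.cast_add, Int.cast_natCast]
      have h1 : ((total : ℤ) : ZMod n) = ∑ c ∈ Finset.range n, ((S c : ℤ) : ZMod n) := by
        rw [htot]
        push_cast
        rfl
      have h2 : ((total : ℤ) : ZMod n) = ((n * (n-1) / 2 : ℕ) : ZMod n) := by
        rw [h1, Finset.sum_congr rfl (fun c hc => hSres c (Finset.mem_range.1 hc)),
          natCast_sum_range T hTinj, sum_univ_zmod]
      have h3 : ((n*(n+1)/2 : ℕ) : ZMod n) + ((n * (n-1) / 2 : ℕ) : ZMod n) = 0 := by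
        rw [← Nat.cast_add]
        have : n*(n+1)/2 + n*(n-1)/2 = n*n := by
          have e1 : 2 ∣ n * (n+1) := (Nat.even_mul_succ_self n).two_dvd
          have e2 : 2 ∣ n * (n-1) := by
            rcases Nat.even_or_odd n with h | h
            · exact Dvd.dvd.mul_right h.two_dvd _
            · have : Even (n - 1) := by
                rcases h with ⟨m, hm⟩
                exact ⟨m, by omega⟩
              exact Dvd.dvd.mul_left this.two_dvd _
          have hA : n*(n+1) = n*n + n := by ring
          have hB : n*(n-1) + n = n*n := by
            rw [← Nat.mul_succ]
            congr 1
            omega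
          omega
        rw [this]
        push_cast
        rw [ZMod.natCast_self]
        ring
      calc ((n*(n+1)/2 : ℕ) : ZMod n) + ((total : ℤ) : ZMod n)
          = ((n*(n+1)/2 : ℕ) : ZMod n) + ((n * (n-1) / 2 : ℕ) : ZMod n) := by rw [h2]
        _ = 0 := h3
    set c0 : ℤ := (((n*(n+1)/2 : ℕ) : ℤ) + total) / n with hc0def
    have hc0 : (n:ℤ) * c0 = ((n*(n+1)/2 : ℕ) : ℤ) + total := Int.mul_ediv_cancel' hdvd
    set Q : ℕ → ℤ := fun a => if a < n then c0 - S a else 0 with hQdef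
    have hQval : ∀ a, a < n → Q a = c0 - S a := by
      intro a ha
      simp [hQdef, ha]
    have hQmem : Q ∈ Vset n := by
      refine ⟨?_, ?_, ?_, ?_⟩
      · intro a ha
        rw [hQval a (by omega), hQval (a+1) ha]
        have hg := hglow a ha
        have hS1 : S (a+1) = S a + (g a : ℤ) := by
          simp [hSdef, Finset.sum_range_succ]
        have : 1 ≤ (g a : ℤ) ∧ (g a : ℤ) ≤ (n:ℤ) - 1 := by
          constructor
          · exact_mod_cast hg.1
          · have : (g a : ℤ) ≤ ((n - 1 : ℕ) : ℤ) := by exact_mod_cast hg.2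
            push_cast [Nat.cast_sub (show 1 ≤ n by omega)] at this
            omega
        omega
      · rw [Finset.sum_congr rfl (fun a ha => hQval a (Finset.mem_range.1 ha)),
          Finset.sum_sub_distrib, Finset.sum_const, Finset.card_range, nsmul_eq_mul, ← htot]
        omega
      · intro a ha b hb hab
        rw [hQval a ha, hQval b hb] at hab
        push_cast at hab
        rw [hSres a ha, hSres b hb] at hab
        have : T a = T b := by linear_combination -hab
        exact hTinj a ha b hb this
      · intro a ha
        simp only [hQdef]
        rw [if_neg (show ¬ a < n by omega)]
    refine ⟨Q, hQmem, ?_⟩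
    funext k
    have hklt := k.isLt
    have hk1 : k.val + 1 < n := by omega
    simp only [Emap]
    rw [hQval 0 (by omega), hQval (k.val+1) hk1]
    push_cast
    rw [hSres 0 (by omega), hSres (k.val+1) hk1, hT0, hTs k.val (by omega)]
    simp only [Fin.eta]
    ring

lemma ncard_Wset (hn : 3 ≤ n) : (Wset n).ncard = Nat.factorial (n-1) := by
  classical
  rw [← Nat.card_coe_set_eq, Nat.card_eq_fintype_card]
  have e : (Wset n) ≃ (Fin (n-1) ↪ {x : ZMod n // x ≠ 0}) := by
    refine ⟨fun F => ⟨fun k => ⟨F.1 k, F.2.2 k⟩, fun k l h => F.2.1 (congrArg Subtype.val h)⟩,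
      fun G => ⟨fun k => (G k).1, fun k l h => G.injective (Subtype.ext h), fun k => (G k).2⟩,
      fun F => ?_, fun G => ?_⟩
    · ext k
      rfl
    · ext k
      rfl
  rw [Fintype.card_congr e, Fintype.card_embedding_eq]
  have h1 : Fintype.card {x : ZMod n // x ≠ 0} = n - 1 := by
    rw [Fintype.card_subtype_compl, ZMod.card, Fintype.card_subtype_eq]
  rw [h1, Fintype.card_fin, Nat.descFactorial_self]



lemma main_set_eq {n : ℕ} [NeZero n] (hn : 3 ≤ n) :
    {u : ZMod n → ℝ | (∀ j, ∃ m : ℤ, u j = (m : ℝ)) ∧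
      ∃ p : List (ZMod n), IsPlay n (-1) (rho n 0) p ∧ playResult n (rho n 0) p = u}
    = toConfig n '' Vset n := by
  apply Set.Subset.antisymm
  · rintro u ⟨hint, p, hplay, hres⟩
    rw [rho_eq_toConfig hn] at hplay hres
    obtain ⟨Q', hQ', h⟩ := plays_stay hn p (Qstart n) (Qstart_mem hn) hplay
    exact ⟨Q', hQ', by rw [← hres, h]⟩
  · rintro u ⟨Q, hQ, rfl⟩
    constructor
    · intro j
      obtain ⟨a, ha, hra⟩ := resid_surj hQ j
      obtain ⟨b, hb, hrb⟩ := resid_surj hQ (j+1)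
      refine ⟨(a:ℤ) - b, ?_⟩
      rw [toConfig, mu_eq hQ ha hra, mu_eq hQ hb hrb]
      push_cast
      ring
    · exact reach_of_mem hn hQ


end main
end AffChip

/-- The set of integral configurations obtainable from `ρ^(0)` by some `(<-1)`-play
(including the empty play) has exactly `(n-1)!` elements. -/
theorem card_reachable_by_lt_neg_one_plays (n : ℕ) [NeZero n] (hn : 3 ≤ n) :
    Set.ncard {u : ZMod n → ℝ | (∀ j, ∃ m : ℤ, u j = (m : ℝ)) ∧
      ∃ p : List (ZMod n), IsPlay n (-1) (rho n 0) p ∧ playResult n (rho n 0) p = u} =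
    Nat.factorial (n - 1) := by
  rw [AffChip.main_set_eq hn, Set.ncard_image_of_injOn AffChip.toConfig_injOn,
    ← Set.ncard_image_of_injOn (AffChip.Emap_injOn hn), AffChip.Emap_image hn,
    AffChip.ncard_Wset hn]
end
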